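/- arXiv:2306.06376 — 14 statements merged into one kernel-verified Lean document; each statement's English description precedes it below -/
import Mathlib

section
/- Let V be a finite type and P : Matrix V V ℝ a row-stochastic matrix that is an absorbing chain, with Abs its set of absorbing states. Then for every subset A ⊆ Abs there exists a unique function x : V → ℝ such that (i) x a = 1 for every a ∈ A, (ii) x a = 0 for every a ∈ Abs \ A, and (iii) x v = ∑ w, P v w * x w for every v ∉ Abs. -/
/-- **Absorption probabilities: existence and uniqueness.**
For a row-stochastic absorbing chain `P` with absorbing states `Abs` and a
target set `A ⊆ Abs`, there is a unique `x : V → ℝ` with `x a = 1` on `A`,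
`x a = 0` on `Abs \ A`, and `x v = ∑ w, P v w * x w` on the transient states. -/
theorem absorbing_chain_exists_unique_absorption_vector
    {V : Type*} [Fintype V] [DecidableEq V]
    (P : Matrix V V ℝ)
    (hnonneg : ∀ v w, 0 ≤ P v w)
    (hrow : ∀ v, ∑ w, P v w = 1)
    (Abs : Set V) (hAbs : Abs = {a : V | P a a = 1})
    (hchain : ∀ v : V, ∃ (n : ℕ) (a : V), a ∈ Abs ∧ 0 < (P ^ n) v a)
    (A : Set V) (hA : A ⊆ Abs) :
    ∃! x : V → ℝ,
      (∀ a ∈ A, x a = 1) ∧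
      (∀ a ∈ Abs \ A, x a = 0) ∧
      (∀ v ∉ Abs, x v = ∑ w, P v w * x w) := by
  classical
  -- nonnegativity of powers
  have hpow : ∀ n : ℕ, ∀ v w, 0 ≤ (P ^ n) v w := by
    intro n
    induction n with
    | zero =>
      intro v w
      rw [pow_zero, Matrix.one_apply]
      split <;> norm_num
    | succ n ih =>
      intro v w
      rw [pow_succ, Matrix.mul_apply]
      exact Finset.sum_nonneg fun u _ => mul_nonneg (ih v u) (hnonneg u w)
  -- the linear map
  let L : (V → ℝ) →ₗ[ℝ] (V → ℝ) :=
    { toFun := fun x v => if v ∈ Abs then x v else x v - ∑ w, P v w * x w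
      map_add' := by
        intro x y
        funext v
        by_cases h : v ∈ Abs <;>
          simp only [h, if_true, if_false, Pi.add_apply, mul_add, Finset.sum_add_distrib] <;> ring
      map_smul' := by
        intro c x
        funext v
        by_cases h : v ∈ Abs <;>
          simp only [h, if_true, if_false, Pi.smul_apply, smul_eq_mul, RingHom.id_apply,
            mul_left_comm, ← Finset.mul_sum] <;> ring }
  have hLdef : ∀ (x : V → ℝ) (v : V),
      L x v = if v ∈ Abs then x v else x v - ∑ w, P v w * x w := fun x v => rfl
  -- kernel is trivial
  have hker : ∀ x : V → ℝ, L x = 0 → x = 0 := by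
    intro x hx
    rcases isEmpty_or_nonempty V with hV | hV
    · funext v; exact (IsEmpty.false v).elim
    have habs : ∀ v ∈ Abs, x v = 0 := by
      intro v hv
      have h := congrFun hx v
      rw [hLdef, if_pos hv] at h
      exact h
    have htr : ∀ v ∉ Abs, x v = ∑ w, P v w * x w := by
      intro v hv
      have h := congrFun hx v
      rw [hLdef, if_neg hv] at h
      have : x v - ∑ w, P v w * x w = 0 := h
      linarith
    obtain ⟨v₀, -, hmax⟩ := Finset.exists_max_image (Finset.univ : Finset V)
      (fun v => |x v|) ⟨Classical.arbitrary V, Finset.mem_univ _⟩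
    set M := |x v₀| with hMdef
    have hM0 : 0 ≤ M := abs_nonneg _
    by_cases hM : M = 0
    · funext v
      have := hmax v (Finset.mem_univ v)
      rw [hM] at this
      have : |x v| = 0 := le_antisymm this (abs_nonneg _)
      simpa using abs_eq_zero.mp this
    · exfalso
      have hMpos : 0 < M := lt_of_le_of_ne hM0 (Ne.symm hM)
      have notabs : ∀ v, |x v| = M → v ∉ Abs := by
        intro v hvM hv
        rw [habs v hv] at hvM
        simp at hvM
        exact hM hvM.symm
      have step : ∀ v, v ∉ Abs → |x v| = M → ∀ w, 0 < P v w → |x w| = M := by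
        intro v hv hvM w hw
        have h1 : M ≤ ∑ u, P v u * |x u| := by
          calc M = |x v| := hvM.symm
            _ = |∑ u, P v u * x u| := by rw [htr v hv]
            _ ≤ ∑ u, |P v u * x u| := Finset.abs_sum_le_sum_abs _ _
            _ = ∑ u, P v u * |x u| := by
                refine Finset.sum_congr rfl fun u _ => ?_
                rw [abs_mul, abs_of_nonneg (hnonneg v u)]
        have hle : ∀ u ∈ Finset.univ, P v u * |x u| ≤ P v u * M :=
          fun u _ => mul_le_mul_of_nonneg_left (hmax u (Finset.mem_univ u)) (hnonneg v u)
        have h2 : ∑ u, P v u * |x u| ≤ ∑ u, P v u * M := Finset.sum_le_sum hle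
        have h3 : ∑ u, P v u * M = M := by rw [← Finset.sum_mul, hrow, one_mul]
        have heq : ∑ u, P v u * |x u| = ∑ u, P v u * M := le_antisymm h2 (by linarith)
        have hall := (Finset.sum_eq_sum_iff_of_le hle).mp heq
        have := hall w (Finset.mem_univ w)
        exact mul_left_cancel₀ (ne_of_gt hw) this
      have prop : ∀ n : ℕ, ∀ v, |x v| = M → ∀ w, 0 < (P ^ n) v w → |x w| = M := by
        intro n
        induction n with
        | zero =>
          intro v hv w hw
          rw [pow_zero, Matrix.one_apply] at hw
          by_cases h : v = w
          · rwa [← h]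
          · rw [if_neg h] at hw; exact absurd hw (lt_irrefl 0)
        | succ n ih =>
          intro v hv w hw
          rw [pow_succ, Matrix.mul_apply] at hw
          obtain ⟨u, -, hu⟩ := Finset.exists_ne_zero_of_sum_ne_zero hw.ne'
          have hu' : 0 < (P ^ n) v u * P u w :=
            lt_of_le_of_ne (mul_nonneg (hpow n v u) (hnonneg u w)) (Ne.symm hu)
          rcases mul_pos_iff.mp hu' with ⟨h1, h2⟩ | ⟨h1, h2⟩
          · have huM := ih v hv u h1
            exact step u (notabs u huM) huM w h2
          · exact absurd h1 (not_lt.mpr (hpow n v u))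
      obtain ⟨n, a, ha, hpa⟩ := hchain v₀
      have haM : |x a| = M := prop n v₀ rfl a hpa
      exact notabs a haM ha
  have hinj : Function.Injective L := by
    intro x y h
    have : L (x - y) = 0 := by rw [map_sub, h, sub_self]
    have := hker _ this
    exact sub_eq_zero.mp this
  have hsurj : Function.Surjective L := LinearMap.injective_iff_surjective.mp hinj
  obtain ⟨x, hx⟩ := hsurj (fun v => if v ∈ A then (1 : ℝ) else 0)
  have hx1 : ∀ a ∈ A, x a = 1 := by
    intro a ha
    have h := congrFun hx a
    rw [hLdef, if_pos (hA ha)] at h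
    simpa [ha] using h
  have hx2 : ∀ a ∈ Abs \ A, x a = 0 := by
    intro a ha
    have h := congrFun hx a
    rw [hLdef, if_pos ha.1] at h
    simpa [ha.2] using h
  have hx3 : ∀ v ∉ Abs, x v = ∑ w, P v w * x w := by
    intro v hv
    have h := congrFun hx v
    rw [hLdef, if_neg hv] at h
    have hvA : v ∉ A := fun hvA => hv (hA hvA)
    simp only [hvA, if_false] at h
    linarith [h]
  refine ⟨x, ⟨hx1, hx2, hx3⟩, ?_⟩
  intro y ⟨hy1, hy2, hy3⟩
  apply hinj
  rw [hx]
  funext v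
  rw [hLdef]
  by_cases hv : v ∈ Abs
  · rw [if_pos hv]
    by_cases hvA : v ∈ A
    · rw [hy1 v hvA, if_pos hvA]
    · rw [hy2 v ⟨hv, hvA⟩, if_neg hvA]
  · rw [if_neg hv]
    have hvA : v ∉ A := fun hvA => hv (hA hvA)
    rw [if_neg hvA, hy3 v hv, sub_self]
end

section
/- Let V be a finite type, P : Matrix V V ℝ a row-stochastic matrix that is an absorbing chain with absorbing states Abs, and A ⊆ Abs. If x : V → ℝ satisfies (i) x a = 1 for every a ∈ A, (ii) x a = 0 for every a ∈ Abs \ A, and (iii) x v = ∑ w, P v w * x w for every v ∉ Abs, then for every state v the sequence n ↦ ∑ a ∈ A, (P ^ n) v a converges to x v, i.e., Filter.Tendsto (fun n => ∑ a ∈ A, (P ^ n) v a) Filter.atTop (nhds (x v)). -/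
/-- **Absorption probabilities as limits.**
If `x` solves the absorption equations for a target set `A ⊆ Abs` of a
row-stochastic absorbing chain `P`, then for every state `v` the `n`-step
probability of having been absorbed in `A` converges to `x v`. -/
theorem absorbing_chain_absorption_prob_tendsto
    {V : Type*} [Fintype V] [DecidableEq V]
    (P : Matrix V V ℝ)
    (hnonneg : ∀ v w, 0 ≤ P v w)
    (hrow : ∀ v, ∑ w, P v w = 1)
    (Abs : Set V) (hAbs : Abs = {a : V | P a a = 1})
    (hchain : ∀ v : V, ∃ (n : ℕ) (a : V), a ∈ Abs ∧ 0 < (P ^ n) v a)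
    (A : Finset V) (hA : ∀ a ∈ A, a ∈ Abs)
    (x : V → ℝ)
    (hx1 : ∀ a ∈ A, x a = 1)
    (hx0 : ∀ a ∈ Abs \ (A : Set V), x a = 0)
    (hxs : ∀ v ∉ Abs, x v = ∑ w, P v w * x w) :
    ∀ v : V, Filter.Tendsto (fun n => ∑ a ∈ A, (P ^ n) v a)
      Filter.atTop (nhds (x v)) := by
  classical
  intro v
  set S : Finset V := Finset.univ.filter (fun w => w ∉ Abs) with hS
  -- absorbing rows are identity rows
  have habs0 : ∀ a ∈ Abs, ∀ w, w ≠ a → P a w = 0 := by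
    intro a ha w hw
    have haa : P a a = 1 := by rw [hAbs] at ha; exact ha
    have hsum : ∑ w ∈ Finset.univ.erase a, P a w = 0 := by
      have h := hrow a
      rw [← Finset.add_sum_erase _ _ (Finset.mem_univ a), haa] at h
      linarith
    exact (Finset.sum_eq_zero_iff_of_nonneg (fun w _ => hnonneg a w)).mp hsum w
      (Finset.mem_erase.mpr ⟨hw, Finset.mem_univ w⟩)
  have hPn_nonneg : ∀ n (v w : V), 0 ≤ (P ^ n) v w := by
    intro n
    induction n with
    | zero => intro v w; simp [Matrix.one_apply]; split <;> norm_num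
    | succ n ih =>
      intro v w
      rw [pow_succ, Matrix.mul_apply]
      exact Finset.sum_nonneg fun u _ => mul_nonneg (ih v u) (hnonneg u w)
  have hPn_row : ∀ n (v : V), ∑ w, (P ^ n) v w = 1 := by
    intro n
    induction n with
    | zero => intro v; simp [Matrix.one_apply]
    | succ n ih =>
      intro v
      simp_rw [pow_succ', Matrix.mul_apply]
      rw [Finset.sum_comm]
      simp_rw [← Finset.mul_sum, ih, mul_one]
      exact hrow v
  have hPn_abs : ∀ n, ∀ a ∈ Abs, ∀ w, (P ^ n) a w = if w = a then 1 else 0 := by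
    intro n
    induction n with
    | zero => intro a _ w; simp [Matrix.one_apply, eq_comm]
    | succ n ih =>
      intro a ha w
      have haa : P a a = 1 := by rw [hAbs] at ha; exact ha
      rw [pow_succ', Matrix.mul_apply]
      rw [Finset.sum_eq_single a (fun u _ hu => by rw [habs0 a ha u hu, zero_mul])
        (fun h => absurd (Finset.mem_univ a) h)]
      rw [haa, one_mul, ih a ha w]
  -- x is harmonic on all states
  have hharm : ∀ u : V, x u = ∑ w, P u w * x w := by
    intro u
    by_cases hu : u ∈ Abs
    · have haa : P u u = 1 := by rw [hAbs] at hu; exact hu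
      rw [Finset.sum_eq_single u (fun w _ hw => by rw [habs0 u hu w hw, zero_mul])
        (fun h => absurd (Finset.mem_univ u) h), haa, one_mul]
    · exact hxs u hu
  have hxPn : ∀ n (u : V), x u = ∑ w, (P ^ n) u w * x w := by
    intro n
    induction n with
    | zero => intro u; simp [Matrix.one_apply]
    | succ n ih =>
      intro u
      simp_rw [pow_succ', Matrix.mul_apply, Finset.sum_mul]
      rw [Finset.sum_comm]
      simp_rw [mul_assoc, ← Finset.mul_sum, ← ih]
      exact hharm u
  -- non-absorption probability Q n u
  have hQ_nonneg : ∀ n (u : V), 0 ≤ ∑ w ∈ S, (P ^ n) u w :=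
    fun n u => Finset.sum_nonneg fun w _ => hPn_nonneg n u w
  have hQ_le_one : ∀ n (u : V), ∑ w ∈ S, (P ^ n) u w ≤ 1 := by
    intro n u
    rw [← hPn_row n u]
    exact Finset.sum_le_sum_of_subset_of_nonneg (Finset.filter_subset _ _)
      (fun w _ _ => hPn_nonneg n u w)
  have hQ_abs : ∀ n, ∀ a ∈ Abs, ∑ w ∈ S, (P ^ n) a w = 0 := by
    intro n a ha
    refine Finset.sum_eq_zero fun w hw => ?_
    have hwA : w ∉ Abs := (Finset.mem_filter.mp hw).2
    rw [hPn_abs n a ha w, if_neg (by intro h; subst h; exact hwA ha)]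
  have hQ_rec : ∀ m n (u : V),
      ∑ w ∈ S, (P ^ (m + n)) u w = ∑ u' ∈ S, (P ^ m) u u' * ∑ w ∈ S, (P ^ n) u' w := by
    intro m n u
    simp_rw [pow_add, Matrix.mul_apply]
    rw [Finset.sum_comm]
    simp_rw [← Finset.mul_sum]
    rw [← Finset.sum_subset (Finset.filter_subset (fun w => w ∉ Abs) Finset.univ)]
    intro u' _ hu'
    have : u' ∈ Abs := by
      by_contra h
      exact hu' (Finset.mem_filter.mpr ⟨Finset.mem_univ u', h⟩)
    rw [hQ_abs n u' this, mul_zero]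
  have hQ_mono : ∀ m n (u : V), ∑ w ∈ S, (P ^ (m + n)) u w ≤ ∑ w ∈ S, (P ^ m) u w := by
    intro m n u
    rw [hQ_rec m n u]
    calc ∑ u' ∈ S, (P ^ m) u u' * ∑ w ∈ S, (P ^ n) u' w
        ≤ ∑ u' ∈ S, (P ^ m) u u' * 1 :=
          Finset.sum_le_sum fun u' _ =>
            mul_le_mul_of_nonneg_left (hQ_le_one n u') (hPn_nonneg m u u')
      _ = ∑ w ∈ S, (P ^ m) u w := by simp
  -- each state has some n with Q n u < 1
  have hQ_lt : ∀ u : V, ∃ n, ∑ w ∈ S, (P ^ n) u w < 1 := by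
    intro u
    obtain ⟨n, a, ha, hpos⟩ := hchain u
    refine ⟨n, ?_⟩
    have hsplit : ∑ w ∈ Finset.univ.filter (fun w => w ∈ Abs), (P ^ n) u w
        + ∑ w ∈ S, (P ^ n) u w = 1 := by
      rw [hS, Finset.sum_filter_add_sum_filter_not, hPn_row]
    have hge : (P ^ n) u a ≤ ∑ w ∈ Finset.univ.filter (fun w => w ∈ Abs), (P ^ n) u w :=
      Finset.single_le_sum (fun w _ => hPn_nonneg n u w)
        (Finset.mem_filter.mpr ⟨Finset.mem_univ a, ha⟩)
    linarith
  choose nv hnv using hQ_lt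
  set N : ℕ := Finset.univ.sup nv + 1 with hN
  have hNpos : 0 < N := Nat.succ_pos _
  have hQN : ∀ u : V, ∑ w ∈ S, (P ^ N) u w < 1 := by
    intro u
    have hle : nv u ≤ N := le_trans (Finset.le_sup (Finset.mem_univ u)) (Nat.le_succ _)
    calc ∑ w ∈ S, (P ^ N) u w = ∑ w ∈ S, (P ^ (nv u + (N - nv u))) u w := by
          rw [Nat.add_sub_cancel' hle]
      _ ≤ ∑ w ∈ S, (P ^ (nv u)) u w := hQ_mono _ _ u
      _ < 1 := hnv u
  haveI : Nonempty V := ⟨v⟩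
  set δ : ℝ := Finset.univ.sup' Finset.univ_nonempty (fun u => ∑ w ∈ S, (P ^ N) u w) with hδ
  have hδlt : δ < 1 := (Finset.sup'_lt_iff _).mpr fun u _ => hQN u
  have hδge : ∀ u : V, ∑ w ∈ S, (P ^ N) u w ≤ δ :=
    fun u => Finset.le_sup' (fun u => ∑ w ∈ S, (P ^ N) u w) (Finset.mem_univ u)
  have hδnn : 0 ≤ δ := le_trans (hQ_nonneg N v) (hδge v)
  have hpow : ∀ k (u : V), ∑ w ∈ S, (P ^ (k * N)) u w ≤ δ ^ k := by
    intro k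
    induction k with
    | zero => intro u; simpa using hQ_le_one 0 u
    | succ k ih =>
      intro u
      have heq : (k + 1) * N = N + k * N := by ring
      rw [heq, hQ_rec N (k * N) u]
      calc ∑ u' ∈ S, (P ^ N) u u' * ∑ w ∈ S, (P ^ (k * N)) u' w
          ≤ ∑ u' ∈ S, (P ^ N) u u' * δ ^ k :=
            Finset.sum_le_sum fun u' _ =>
              mul_le_mul_of_nonneg_left (ih u') (hPn_nonneg N u u')
        _ = (∑ w ∈ S, (P ^ N) u w) * δ ^ k := by rw [Finset.sum_mul]
        _ ≤ δ * δ ^ k := mul_le_mul_of_nonneg_right (hδge u) (pow_nonneg hδnn k)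
        _ = δ ^ (k + 1) := by ring
  have hQbound : ∀ n, ∑ w ∈ S, (P ^ n) v w ≤ δ ^ (n / N) := by
    intro n
    calc ∑ w ∈ S, (P ^ n) v w = ∑ w ∈ S, (P ^ (n / N * N + n % N)) v w := by
          rw [Nat.div_add_mod']
      _ ≤ ∑ w ∈ S, (P ^ (n / N * N)) v w := hQ_mono _ _ v
      _ ≤ δ ^ (n / N) := hpow _ v
  have hdivtend : Filter.Tendsto (fun n : ℕ => n / N) Filter.atTop Filter.atTop := by
    refine Filter.tendsto_atTop_atTop.mpr fun b => ⟨b * N, fun n hn => ?_⟩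
    exact (Nat.le_div_iff_mul_le hNpos).mpr hn
  have hQtend : Filter.Tendsto (fun n => ∑ w ∈ S, (P ^ n) v w) Filter.atTop (nhds 0) :=
    squeeze_zero (fun n => hQ_nonneg n v) hQbound
      ((tendsto_pow_atTop_nhds_zero_of_lt_one hδnn hδlt).comp hdivtend)
  -- the identity
  have hident : ∀ n, x v - ∑ a ∈ A, (P ^ n) v a = ∑ w ∈ S, (P ^ n) v w * x w := by
    intro n
    have hsplit : ∑ w ∈ Finset.univ.filter (fun w => w ∈ Abs), (P ^ n) v w * x w
        + ∑ w ∈ S, (P ^ n) v w * x w = x v := by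
      rw [hS, Finset.sum_filter_add_sum_filter_not, ← hxPn]
    have hT : ∑ w ∈ Finset.univ.filter (fun w => w ∈ Abs), (P ^ n) v w * x w
        = ∑ a ∈ A, (P ^ n) v a := by
      rw [← Finset.sum_subset (fun a ha => Finset.mem_filter.mpr ⟨Finset.mem_univ a, hA a ha⟩)
        (fun w hw hwA => by
          rw [hx0 w ⟨(Finset.mem_filter.mp hw).2, hwA⟩, mul_zero])]
      exact Finset.sum_congr rfl fun a ha => by rw [hx1 a ha, mul_one]
    linarith [hsplit, hT]
  set M : ℝ := ∑ w, |x w| with hM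
  have hMle : ∀ w : V, |x w| ≤ M :=
    fun w => Finset.single_le_sum (fun w _ => abs_nonneg (x w)) (Finset.mem_univ w)
  have hbound : ∀ n, ‖(∑ a ∈ A, (P ^ n) v a) - x v‖ ≤ M * ∑ w ∈ S, (P ^ n) v w := by
    intro n
    rw [Real.norm_eq_abs, abs_sub_comm, hident n]
    calc |∑ w ∈ S, (P ^ n) v w * x w| ≤ ∑ w ∈ S, |(P ^ n) v w * x w| :=
          Finset.abs_sum_le_sum_abs _ _
      _ = ∑ w ∈ S, (P ^ n) v w * |x w| := by
          refine Finset.sum_congr rfl fun w _ => ?_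
          rw [abs_mul, abs_of_nonneg (hPn_nonneg n v w)]
      _ ≤ ∑ w ∈ S, (P ^ n) v w * M :=
          Finset.sum_le_sum fun w _ =>
            mul_le_mul_of_nonneg_left (hMle w) (hPn_nonneg n v w)
      _ = M * ∑ w ∈ S, (P ^ n) v w := by rw [← Finset.sum_mul]; ring
  have htend0 : Filter.Tendsto (fun n => (∑ a ∈ A, (P ^ n) v a) - x v)
      Filter.atTop (nhds 0) := by
    refine squeeze_zero_norm hbound ?_
    have := hQtend.const_mul M
    simpa using this
  simpa using tendsto_sub_nhds_zero_iff.mp htend0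
end

section
/- Let V be a finite type, P : Matrix V V ℝ a row-stochastic matrix that is an absorbing chain with absorbing states Abs, and A ⊆ Abs. Let T be the subtype of non-absorbing states, Q : Matrix T T ℝ the restriction of P to T (Q i j = P i j), and r : T → ℝ given by r t = ∑ a ∈ A, P t a. Then for every non-absorbing state v, the sequence n ↦ ∑ a ∈ A, (P ^ n) v a converges to the v-th entry of the vector (1 − Q)⁻¹ *ᵥ r. -/
open Matrix


open Matrix Finset Filter

namespace AbsAux

variable {V : Type*} [Fintype V] [DecidableEq V]

lemma pow_entry_nonneg (P : Matrix V V ℝ) (h : ∀ v w, 0 ≤ P v w) :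
    ∀ (n : ℕ) (v w : V), 0 ≤ (P ^ n) v w := by
  intro n
  induction n with
  | zero => intro v w; by_cases hvw : v = w <;> simp [Matrix.one_apply, hvw]
  | succ n ih =>
      intro v w
      rw [pow_succ, Matrix.mul_apply]
      exact Finset.sum_nonneg fun u _ => mul_nonneg (ih v u) (h u w)

lemma pow_row_sum (P : Matrix V V ℝ) (h : ∀ v, ∑ w, P v w = 1) :
    ∀ (n : ℕ) (v : V), ∑ w, (P ^ n) v w = 1 := by
  intro n
  induction n with
  | zero => intro v; simp [Matrix.one_apply]
  | succ n ih =>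
      intro v
      rw [pow_succ]
      simp only [Matrix.mul_apply]
      rw [Finset.sum_comm]
      calc ∑ u, ∑ w, (P ^ n) v u * P u w
          = ∑ u, (P ^ n) v u * ∑ w, P u w := by simp [Finset.mul_sum]
        _ = 1 := by simp [h, ih v]

lemma absorbing_row (P : Matrix V V ℝ) (hnonneg : ∀ v w, 0 ≤ P v w)
    (hrow : ∀ v, ∑ w, P v w = 1) {a : V} (ha : P a a = 1) :
    ∀ w, P a w = if a = w then 1 else 0 := by
  have h1 : ∑ w ∈ Finset.univ.erase a, P a w = 0 := by
    have h2 := hrow a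
    rw [← Finset.add_sum_erase _ _ (Finset.mem_univ a)] at h2
    linarith
  intro w
  by_cases hw : a = w
  · simp [← hw, ha]
  · simp only [hw, if_false]
    exact (Finset.sum_eq_zero_iff_of_nonneg (fun x _ => hnonneg a x)).mp h1 w
      (Finset.mem_erase.mpr ⟨fun h => hw h.symm, Finset.mem_univ w⟩)

lemma absorbing_pow (P : Matrix V V ℝ) (hnonneg : ∀ v w, 0 ≤ P v w)
    (hrow : ∀ v, ∑ w, P v w = 1) {a : V} (ha : P a a = 1) :
    ∀ (n : ℕ) (w : V), (P ^ n) a w = if a = w then 1 else 0 := by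
  intro n
  induction n with
  | zero => intro w; simp [Matrix.one_apply]
  | succ n ih =>
      intro w
      rw [pow_succ', Matrix.mul_apply]
      have : ∀ u ∈ Finset.univ, u ≠ a → P a u * (P ^ n) u w = 0 := by
        intro u _ hu
        rw [absorbing_row P hnonneg hrow ha u, if_neg (fun h => hu h.symm), zero_mul]
      rw [Finset.sum_eq_single a (fun u _ hu => this u (Finset.mem_univ u) hu)
        (fun h => absurd (Finset.mem_univ a) h)]
      rw [ha, one_mul, ih w]

end AbsAux


namespace AbsAux2

variable {V : Type*} [Fintype V] [DecidableEq V]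

omit [DecidableEq V] in
lemma sum_split (P : Matrix V V ℝ) (f : V → ℝ) :
    ∑ u, f u = (∑ u : {v : V // P v v ≠ 1}, f u)
      + ∑ u ∈ Finset.univ.filter (fun u => P u u = 1), f u := by
  rw [← Finset.sum_filter_add_sum_filter_not Finset.univ (fun u => P u u ≠ 1) f]
  congr 1
  · exact (Finset.sum_subtype (p := fun u => P u u ≠ 1)
      (Finset.univ.filter (fun u => P u u ≠ 1)) (by simp) f)
  · simp only [not_not]

lemma Qpow (P : Matrix V V ℝ) (hnonneg : ∀ v w, 0 ≤ P v w) (hrow : ∀ v, ∑ w, P v w = 1)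
    (Q : Matrix {v : V // P v v ≠ 1} {v : V // P v v ≠ 1} ℝ)
    (hQ : ∀ i j : {v : V // P v v ≠ 1}, Q i j = P i j) :
    ∀ (n : ℕ) (i j : {v : V // P v v ≠ 1}), (Q ^ n) i j = (P ^ n) (i : V) (j : V) := by
  intro n
  induction n with
  | zero =>
      intro i j
      simp only [pow_zero, Matrix.one_apply]
      by_cases h : i = j
      · simp [h]
      · rw [if_neg h, if_neg (fun hv => h (Subtype.ext hv))]
  | succ n ih =>
      intro i j
      rw [pow_succ', pow_succ', Matrix.mul_apply, Matrix.mul_apply]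
      rw [sum_split P (fun u => P (i : V) u * (P ^ n) u (j : V))]
      have habs : ∑ u ∈ Finset.univ.filter (fun u => P u u = 1),
          P (i : V) u * (P ^ n) u (j : V) = 0 := by
        apply Finset.sum_eq_zero
        intro u hu
        have hu1 : P u u = 1 := (Finset.mem_filter.mp hu).2
        have : (P ^ n) u (j : V) = 0 := by
          rw [AbsAux.absorbing_pow P hnonneg hrow hu1 n]
          rw [if_neg]
          intro h
          exact j.2 (h ▸ hu1)
        rw [this, mul_zero]
      rw [habs, add_zero]
      apply Finset.sum_congr rfl
      intro u _
      rw [hQ, ih]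

end AbsAux2
namespace AbsAux3

variable {V : Type*} [Fintype V] [DecidableEq V]

lemma g_closed (P : Matrix V V ℝ) (hnonneg : ∀ v w, 0 ≤ P v w) (hrow : ∀ v, ∑ w, P v w = 1)
    (A : Finset V) (hA' : ∀ a ∈ A, P a a = 1)
    (Q : Matrix {v : V // P v v ≠ 1} {v : V // P v v ≠ 1} ℝ)
    (hQ : ∀ i j : {v : V // P v v ≠ 1}, Q i j = P i j)
    (r : {v : V // P v v ≠ 1} → ℝ)
    (hr : ∀ t : {v : V // P v v ≠ 1}, r t = ∑ a ∈ A, P t a) :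
    ∀ (n : ℕ) (t : {v : V // P v v ≠ 1}),
      ∑ a ∈ A, (P ^ n) (t : V) a = ((∑ k ∈ Finset.range n, Q ^ k) *ᵥ r) t := by
  intro n
  induction n with
  | zero =>
      intro t
      rw [Finset.range_zero, Finset.sum_empty, Matrix.zero_mulVec]
      simp only [pow_zero, Pi.zero_apply]
      apply Finset.sum_eq_zero
      intro a ha
      rw [Matrix.one_apply, if_neg]
      intro h
      exact t.2 (h ▸ hA' a ha)
  | succ n ih =>
      intro t
      have lhs : ∑ a ∈ A, (P ^ (n + 1)) (t : V) a
          = ∑ u, P (t : V) u * ∑ a ∈ A, (P ^ n) u a := by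
        simp only [pow_succ', Matrix.mul_apply]
        rw [Finset.sum_comm]
        simp [Finset.mul_sum]
      rw [lhs, AbsAux2.sum_split P (fun u => P (t : V) u * ∑ a ∈ A, (P ^ n) u a)]
      have habs : ∑ u ∈ Finset.univ.filter (fun u => P u u = 1),
          P (t : V) u * ∑ a ∈ A, (P ^ n) u a = r t := by
        have step : ∀ u ∈ Finset.univ.filter (fun u => P u u = 1),
            P (t : V) u * ∑ a ∈ A, (P ^ n) u a
              = if u ∈ A then P (t : V) u else 0 := by
          intro u hu
          have hu1 : P u u = 1 := (Finset.mem_filter.mp hu).2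
          have : ∑ a ∈ A, (P ^ n) u a = if u ∈ A then 1 else 0 := by
            rw [Finset.sum_congr rfl
              (fun a _ => AbsAux.absorbing_pow P hnonneg hrow hu1 n a)]
            exact Finset.sum_ite_eq A u (fun _ => (1 : ℝ))
          rw [this, mul_ite, mul_one, mul_zero]
        rw [Finset.sum_congr rfl step, ← Finset.sum_filter]
        rw [hr]
        apply Finset.sum_congr _ (fun a _ => rfl)
        ext u
        simp only [Finset.mem_filter, Finset.mem_univ, true_and]
        exact ⟨fun h => h.2, fun h => ⟨hA' u h, h⟩⟩
      rw [habs]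
      have hT : (∑ u : {v : V // P v v ≠ 1}, P (t : V) u * ∑ a ∈ A, (P ^ n) u a)
          = ((Q * ∑ k ∈ Finset.range n, Q ^ k) *ᵥ r) t := by
        rw [← Matrix.mulVec_mulVec, Matrix.mulVec, dotProduct]
        apply Finset.sum_congr rfl
        intro u _
        rw [hQ, ih u]
      rw [hT, geom_sum_succ, Matrix.add_mulVec, Matrix.one_mulVec]
      rfl

end AbsAux3
namespace AbsAux4

variable {V : Type*} [Fintype V] [DecidableEq V]

lemma qpow_tendsto_zero (P : Matrix V V ℝ)
    (hnonneg : ∀ v w, 0 ≤ P v w) (hrow : ∀ v, ∑ w, P v w = 1)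
    (hchain : ∀ v : V, ∃ (n : ℕ) (a : V), P a a = 1 ∧ 0 < (P ^ n) v a)
    (Q : Matrix {v : V // P v v ≠ 1} {v : V // P v v ≠ 1} ℝ)
    (hQ : ∀ i j : {v : V // P v v ≠ 1}, Q i j = P i j)
    [Nonempty {v : V // P v v ≠ 1}] :
    ∀ i j : {v : V // P v v ≠ 1},
      Filter.Tendsto (fun n => (Q ^ n) i j) Filter.atTop (nhds 0) := by
  have hQP : ∀ (n : ℕ) (i j : {v : V // P v v ≠ 1}), (Q ^ n) i j = (P ^ n) (i : V) (j : V) :=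
    AbsAux2.Qpow P hnonneg hrow Q hQ
  have hq0 : ∀ (n : ℕ) (i j : {v : V // P v v ≠ 1}), 0 ≤ (Q ^ n) i j := fun n i j => by
    rw [hQP]; exact AbsAux.pow_entry_nonneg P hnonneg n _ _
  set s : ℕ → {v : V // P v v ≠ 1} → ℝ := fun n i => ∑ j : {v : V // P v v ≠ 1}, (Q ^ n) i j with hs
  set b : ℕ → V → ℝ := fun n v =>
    ∑ w ∈ Finset.univ.filter (fun w => P w w = 1), (P ^ n) v w with hb
  have hsb : ∀ (n : ℕ) (i : {v : V // P v v ≠ 1}), s n i = 1 - b n (i : V) := by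
    intro n i
    have h1 := AbsAux.pow_row_sum P hrow n (i : V)
    rw [AbsAux2.sum_split P (fun w => (P ^ n) (i : V) w)] at h1
    have h2 : s n i = ∑ u : {v : V // P v v ≠ 1}, (P ^ n) (i : V) (u : V) :=
      Finset.sum_congr rfl (fun u _ => hQP n i u)
    rw [h2]
    linarith
  have hb0 : ∀ (n : ℕ) (v : V), 0 ≤ b n v := fun n v =>
    Finset.sum_nonneg fun w _ => AbsAux.pow_entry_nonneg P hnonneg n v w
  have hbmono : ∀ v : V, Monotone (fun n => b n v) := by
    intro v
    apply monotone_nat_of_le_succ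
    intro n
    apply Finset.sum_le_sum
    intro w hw
    have hw1 : P w w = 1 := (Finset.mem_filter.mp hw).2
    calc (P ^ n) v w = (P ^ n) v w * P w w := by rw [hw1, mul_one]
      _ ≤ ∑ u, (P ^ n) v u * P u w :=
          Finset.single_le_sum (f := fun u => (P ^ n) v u * P u w)
            (fun u _ => mul_nonneg (AbsAux.pow_entry_nonneg P hnonneg n v u) (hnonneg u w))
            (Finset.mem_univ w)
      _ = (P ^ (n + 1)) v w := by rw [pow_succ, Matrix.mul_apply]
  have santi : ∀ (i : {v : V // P v v ≠ 1}) {m n : ℕ}, m ≤ n → s n i ≤ s m i := by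
    intro i m n hmn
    rw [hsb, hsb]
    linarith [hbmono (i : V) hmn]
  have hs0 : ∀ (n : ℕ) (i : {v : V // P v v ≠ 1}), 0 ≤ s n i := fun n i =>
    Finset.sum_nonneg fun j _ => hq0 n i j
  have hs1' : ∀ (n : ℕ) (i : {v : V // P v v ≠ 1}), s n i ≤ 1 := by
    intro n i; rw [hsb]; linarith [hb0 n (i : V)]
  -- choose absorption times
  choose nf af haf hpos using hchain
  have hnf1 : ∀ i : {v : V // P v v ≠ 1}, 1 ≤ nf (i : V) := by
    intro i
    by_contra h
    push_neg at h
    interval_cases h' : nf (i : V)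
    have h2 := hpos (i : V)
    rw [h'] at h2
    simp only [pow_zero, Matrix.one_apply] at h2
    split_ifs at h2 with he
    · exact i.2 (he ▸ haf (i : V))
    · exact lt_irrefl 0 h2
  obtain ⟨N, hN1, hNle⟩ : ∃ N : ℕ, 0 < N ∧ ∀ i : {v : V // P v v ≠ 1}, nf (i : V) ≤ N := by
    refine ⟨Finset.univ.sup (fun i : {v : V // P v v ≠ 1} => nf (i : V)), ?_, ?_⟩
    · exact lt_of_lt_of_le (hnf1 (Classical.arbitrary _))
        (Finset.le_sup (f := fun i : {v : V // P v v ≠ 1} => nf (i : V)) (Finset.mem_univ _))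
    · exact fun i => Finset.le_sup (f := fun i : {v : V // P v v ≠ 1} => nf (i : V)) (Finset.mem_univ i)
  have hsN : ∀ i : {v : V // P v v ≠ 1}, s N i < 1 := by
    intro i
    have h1 : s N i ≤ s (nf (i : V)) i := santi i (hNle i)
    have h2 : 0 < b (nf (i : V)) (i : V) := by
      have hmem : af (i : V) ∈ Finset.univ.filter (fun w => P w w = 1) := by
        simp [haf (i : V)]
      calc (0 : ℝ) < (P ^ nf (i : V)) (i : V) (af (i : V)) := hpos (i : V)
        _ ≤ b (nf (i : V)) (i : V) :=
          Finset.single_le_sum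
            (fun w _ => AbsAux.pow_entry_nonneg P hnonneg _ _ w) hmem
    have h3 := hsb (nf (i : V)) i
    linarith
  obtain ⟨c, hc0, hc1, hsc⟩ : ∃ c : ℝ, 0 ≤ c ∧ c < 1 ∧ ∀ i : {v : V // P v v ≠ 1}, s N i ≤ c := by
    refine ⟨Finset.univ.sup' Finset.univ_nonempty (fun i => s N i), ?_, ?_, ?_⟩
    · exact le_trans (hs0 N (Classical.arbitrary _))
        (Finset.le_sup' _ (Finset.mem_univ (Classical.arbitrary _)))
    · exact (Finset.sup'_lt_iff _).mpr fun i _ => hsN i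
    · exact fun i => Finset.le_sup' _ (Finset.mem_univ i)
  -- geometric decay along multiples of N
  have hk : ∀ (k : ℕ) (i : {v : V // P v v ≠ 1}), s (k * N) i ≤ c ^ k := by
    intro k
    induction k with
    | zero =>
        intro i
        simp only [zero_mul, pow_zero]
        exact hs1' 0 i
    | succ k ih =>
        intro i
        have heq : s ((k + 1) * N) i = ∑ u : {v : V // P v v ≠ 1}, (Q ^ N) i u * s (k * N) u := by
          rw [hs]
          simp only
          have h4 : (k + 1) * N = N + k * N := by ring
          rw [h4, pow_add]
          simp only [Matrix.mul_apply]
          rw [Finset.sum_comm]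
          simp [Finset.mul_sum]
        rw [heq]
        calc ∑ u : {v : V // P v v ≠ 1}, (Q ^ N) i u * s (k * N) u
            ≤ ∑ u : {v : V // P v v ≠ 1}, (Q ^ N) i u * c ^ k :=
              Finset.sum_le_sum fun u _ =>
                mul_le_mul_of_nonneg_left (ih u) (hq0 N i u)
          _ = s N i * c ^ k := by rw [← Finset.sum_mul]
          _ ≤ c * c ^ k :=
              mul_le_mul_of_nonneg_right (hsc i) (pow_nonneg hc0 k)
          _ = c ^ (k + 1) := by ring
  have bound : ∀ (n : ℕ) (i j : {v : V // P v v ≠ 1}), (Q ^ n) i j ≤ c ^ (n / N) := by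
    intro n i j
    calc (Q ^ n) i j ≤ s n i :=
          Finset.single_le_sum (fun u _ => hq0 n i u) (Finset.mem_univ j)
      _ ≤ s ((n / N) * N) i := santi i (Nat.div_mul_le_self n N)
      _ ≤ c ^ (n / N) := hk (n / N) i
  intro i j
  have hdiv : Filter.Tendsto (fun n : ℕ => n / N) Filter.atTop Filter.atTop := by
    apply Filter.tendsto_atTop_atTop.mpr
    intro m
    exact ⟨m * N, fun n hn => (Nat.le_div_iff_mul_le hN1).mpr hn⟩
  have hpow : Filter.Tendsto (fun k : ℕ => c ^ k) Filter.atTop (nhds 0) :=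
    tendsto_pow_atTop_nhds_zero_of_lt_one hc0 hc1
  exact squeeze_zero (fun n => hq0 n i j) (fun n => bound n i j) (hpow.comp hdiv)

end AbsAux4

/-- **Absorption probabilities via the fundamental matrix.**
For a row-stochastic absorbing chain `P` with absorbing states `Abs` and a
target set `A ⊆ Abs`, letting `T` be the non-absorbing states, `Q` the
restriction of `P` to `T` and `r t = ∑ a ∈ A, P t a`, the `n`-step absorption
probability in `A` from a non-absorbing state `v` converges to the `v`-entry
of `(1 - Q)⁻¹ *ᵥ r`. -/
theorem absorbing_chain_absorption_prob_fundamental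
    {V : Type*} [Fintype V] [DecidableEq V]
    (P : Matrix V V ℝ)
    (hnonneg : ∀ v w, 0 ≤ P v w)
    (hrow : ∀ v, ∑ w, P v w = 1)
    (Abs : Set V) (hAbs : Abs = {a : V | P a a = 1})
    (hchain : ∀ v : V, ∃ (n : ℕ) (a : V), a ∈ Abs ∧ 0 < (P ^ n) v a)
    (A : Finset V) (hA : ∀ a ∈ A, a ∈ Abs)
    (Q : Matrix {v : V // P v v ≠ 1} {v : V // P v v ≠ 1} ℝ)
    (hQ : ∀ i j : {v : V // P v v ≠ 1}, Q i j = P i j)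
    (r : {v : V // P v v ≠ 1} → ℝ)
    (hr : ∀ t : {v : V // P v v ≠ 1}, r t = ∑ a ∈ A, P t a) :
    ∀ v : {v : V // P v v ≠ 1},
      Filter.Tendsto (fun n => ∑ a ∈ A, (P ^ n) (v : V) a)
        Filter.atTop (nhds (((1 - Q)⁻¹ *ᵥ r) v)) := by
  intro v
  haveI : Nonempty {v : V // P v v ≠ 1} := ⟨v⟩
  have hchain' : ∀ v : V, ∃ (n : ℕ) (a : V), P a a = 1 ∧ 0 < (P ^ n) v a := by
    intro u
    obtain ⟨n, a, ha, hp⟩ := hchain u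
    exact ⟨n, a, by rwa [hAbs] at ha, hp⟩
  have hA' : ∀ a ∈ A, P a a = 1 := fun a ha => by
    have := hA a ha; rwa [hAbs] at this
  have hQ0 := AbsAux4.qpow_tendsto_zero P hnonneg hrow hchain' Q hQ
  -- invertibility of 1 - Q
  have hdet : IsUnit (1 - Q).det := by
    rw [isUnit_iff_ne_zero]
    intro h0
    obtain ⟨x, hx0, hx⟩ := Matrix.exists_mulVec_eq_zero_iff.mpr h0
    have hfixQ : Q *ᵥ x = x := by
      have h := hx
      rw [Matrix.sub_mulVec, Matrix.one_mulVec, sub_eq_zero] at h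
      exact h.symm
    have hfix : ∀ n : ℕ, (Q ^ n) *ᵥ x = x := by
      intro n
      induction n with
      | zero => simp [Matrix.one_mulVec]
      | succ n ih => rw [pow_succ', ← Matrix.mulVec_mulVec, ih, hfixQ]
    have hzero : ∀ i, x i = 0 := by
      intro i
      have h1 : Filter.Tendsto (fun n => ((Q ^ n) *ᵥ x) i) Filter.atTop (nhds 0) := by
        simp only [Matrix.mulVec, dotProduct]
        have := tendsto_finset_sum Finset.univ
          (fun j _ => (hQ0 i j).mul_const (x j))
        simpa using this
      have h2 : Filter.Tendsto (fun n => ((Q ^ n) *ᵥ x) i) Filter.atTop (nhds (x i)) := by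
        simp only [hfix]
        exact tendsto_const_nhds
      exact (tendsto_nhds_unique h2 h1)
    exact hx0 (funext hzero)
  have hS : ∀ n : ℕ, (∑ k ∈ Finset.range n, Q ^ k) = (1 - Q ^ n) * (1 - Q)⁻¹ := by
    intro n
    have h1 : (∑ k ∈ Finset.range n, Q ^ k) * (1 - Q) = 1 - Q ^ n := by
      rw [show (1 - Q) = -(Q - 1) from (neg_sub Q 1).symm, mul_neg, geom_sum_mul, neg_sub]
    calc (∑ k ∈ Finset.range n, Q ^ k)
        = (∑ k ∈ Finset.range n, Q ^ k) * ((1 - Q) * (1 - Q)⁻¹) := by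
          rw [Matrix.mul_nonsing_inv _ hdet, mul_one]
      _ = ((∑ k ∈ Finset.range n, Q ^ k) * (1 - Q)) * (1 - Q)⁻¹ := by rw [mul_assoc]
      _ = (1 - Q ^ n) * (1 - Q)⁻¹ := by rw [h1]
  have hgc := AbsAux3.g_closed P hnonneg hrow A hA' Q hQ r hr
  have hfun : (fun n => ∑ a ∈ A, (P ^ n) (v : V) a)
      = fun n => ((∑ k ∈ Finset.range n, Q ^ k) *ᵥ r) v := funext fun n => hgc n v
  rw [hfun]
  have key : ∀ j, Filter.Tendsto (fun n => (∑ k ∈ Finset.range n, Q ^ k) v j)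
      Filter.atTop (nhds ((1 - Q)⁻¹ v j)) := by
    intro j
    simp only [hS, Matrix.mul_apply]
    have h2 : (1 - Q)⁻¹ v j = ∑ u, (1 : Matrix {v : V // P v v ≠ 1} {v : V // P v v ≠ 1} ℝ) v u * (1 - Q)⁻¹ u j := by
      rw [← Matrix.mul_apply, Matrix.one_mul]
    rw [h2]
    apply tendsto_finset_sum
    intro u _
    apply Filter.Tendsto.mul_const
    simp only [Matrix.sub_apply]
    have hconst : Filter.Tendsto
        (fun _ : ℕ => (1 : Matrix {v : V // P v v ≠ 1} {v : V // P v v ≠ 1} ℝ) v u)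
        Filter.atTop (nhds ((1 : Matrix {v : V // P v v ≠ 1} {v : V // P v v ≠ 1} ℝ) v u)) :=
      tendsto_const_nhds
    have := hconst.sub (hQ0 v u)
    simpa using this
  simp only [Matrix.mulVec, dotProduct]
  exact tendsto_finset_sum Finset.univ (fun j _ => (key j).mul_const (r j))
end

section
/- Let V be a finite type and P : Matrix V V ℝ a row-stochastic matrix that is an absorbing chain with absorbing states Abs. Then for every state v, the total absorption probability tends to 1: Filter.Tendsto (fun n => ∑ a ∈ Abs, (P ^ n) v a) Filter.atTop (nhds 1). -/
/-!
Let `f k v` be the probability of sitting in an absorbing state at time `k`. Absorbing states are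
never left, so `f k` is nondecreasing in `k`, and it is bounded by `1`; hence it converges to some
`L`. Passing to the limit in `f (k + l) = P ^ k *ᵥ f l` gives `P ^ k *ᵥ L = L` for every `k`, and
`L = 1` on the absorbing states. At a state `u` where `L` is minimal, `L u` is an average of
values `≥ L u`, so `L` takes the value `L u` wherever `(P ^ k) u` has positive mass; taking `k`
such that an absorbing state is reached gives `min L = 1`, so `L = 1`.
-/

open Filter Topology Finset Matrix

section RowStochastic

variable {R n : Type*} [Fintype n]

theorem Matrix.mulVec_mono_of_nonneg [Semiring R] [PartialOrder R] [IsOrderedRing R]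
    {M : Matrix n n R} (hM : ∀ i j, 0 ≤ M i j) {x y : n → R} (hxy : x ≤ y) :
    M *ᵥ x ≤ M *ᵥ y := fun i =>
  sum_le_sum fun j _ => mul_le_mul_of_nonneg_left (hxy j) (hM i j)

variable [DecidableEq n] [Ring R] [LinearOrder R] [IsStrictOrderedRing R] {M : Matrix n n R}

theorem Matrix.mulVec_apply_of_diag_eq_one (hM : M ∈ rowStochastic R n) {a : n}
    (ha : M a a = 1) (x : n → R) : (M *ᵥ x) a = x a := by
  have hoff : ∑ j ∈ univ.erase a, M a j = 0 := by
    have := sum_row_of_mem_rowStochastic hM a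
    rwa [← add_sum_erase _ _ (mem_univ a), ha, add_eq_left] at this
  rw [mulVec, dotProduct, sum_eq_single a, ha, one_mul]
  · intro j _ hj
    rw [(sum_eq_zero_iff_of_nonneg fun j _ => hM.1 a j).1 hoff j (mem_erase.2 ⟨hj, mem_univ j⟩),
      zero_mul]
  · exact fun h => absurd (mem_univ a) h

theorem Matrix.pow_mulVec_apply_of_diag_eq_one (hM : M ∈ rowStochastic R n) {a : n}
    (ha : M a a = 1) (k : ℕ) (x : n → R) : (M ^ k *ᵥ x) a = x a := by
  induction k with
  | zero => rw [pow_zero, one_mulVec]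
  | succ k ih => rw [pow_succ', ← mulVec_mulVec, mulVec_apply_of_diag_eq_one hM ha, ih]

theorem Matrix.apply_eq_of_mulVec_apply_eq_of_forall_le (hM : M ∈ rowStochastic R n)
    {x : n → R} {i j : n} (hmin : ∀ k, x i ≤ x k) (hfix : (M *ᵥ x) i = x i)
    (hpos : 0 < M i j) : x j = x i := by
  have hsum : ∑ k, M i k * (x k - x i) = 0 := by
    simp only [mul_sub, sum_sub_distrib, ← sum_mul, sum_row_of_mem_rowStochastic hM, one_mul]
    rw [← hfix]; simp [mulVec, dotProduct]
  have hterm := (sum_eq_zero_iff_of_nonneg fun k _ =>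
    mul_nonneg (hM.1 i k) (sub_nonneg.2 (hmin k))).1 hsum j (mem_univ j)
  rcases mul_eq_zero.1 hterm with h | h
  · exact absurd h hpos.ne'
  · exact sub_eq_zero.1 h

end RowStochastic

section Absorption

variable {V : Type*} [Fintype V] [DecidableEq V] {P : Matrix V V ℝ} {Abs : Finset V}

noncomputable def absorptionProb (P : Matrix V V ℝ) (Abs : Finset V) (k : ℕ) : V → ℝ :=
  P ^ k *ᵥ (Abs : Set V).indicator 1

theorem absorptionProb_apply (k : ℕ) (v : V) :
    absorptionProb P Abs k v = ∑ a ∈ Abs, (P ^ k) v a := by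
  simp [absorptionProb, mulVec, dotProduct, Set.indicator_apply, sum_ite_mem]

theorem absorptionProb_add (k l : ℕ) :
    absorptionProb P Abs (k + l) = P ^ k *ᵥ absorptionProb P Abs l := by
  rw [absorptionProb, absorptionProb, mulVec_mulVec, pow_add]

theorem pow_mulVec_eq_of_tendsto_absorptionProb {L : V → ℝ}
    (hL : Tendsto (absorptionProb P Abs) atTop (𝓝 L)) (k : ℕ) : P ^ k *ᵥ L = L := by
  have hshift : Tendsto (fun l => absorptionProb P Abs (k + l)) atTop (𝓝 L) := by
    simpa only [add_comm k] using (tendsto_add_atTop_iff_nat k).2 hL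
  simp only [absorptionProb_add] at hshift
  exact tendsto_nhds_unique
    (((continuous_const.matrix_mulVec continuous_id).tendsto L).comp hL) hshift

variable (hP : P ∈ rowStochastic ℝ V)
include hP

theorem absorptionProb_le_one (k : ℕ) : absorptionProb P Abs k ≤ 1 := by
  calc absorptionProb P Abs k ≤ P ^ k *ᵥ 1 :=
        mulVec_mono_of_nonneg (pow_mem hP k).1 (Set.indicator_le_self' fun _ _ => zero_le_one)
    _ = 1 := (pow_mem hP k).2

variable (hAbs : ∀ a ∈ Abs, P a a = 1)
include hAbs

theorem absorptionProb_of_mem (k : ℕ) {a : V} (ha : a ∈ Abs) : absorptionProb P Abs k a = 1 := by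
  rw [absorptionProb, pow_mulVec_apply_of_diag_eq_one hP (hAbs a ha)]
  simp [ha]

theorem monotone_absorptionProb : Monotone (absorptionProb P Abs) := by
  refine monotone_nat_of_le_succ fun k => ?_
  have hstep : absorptionProb P Abs 0 ≤ absorptionProb P Abs 1 := fun w => by
    by_cases hw : w ∈ Abs
    · rw [absorptionProb_of_mem hP hAbs 0 hw, absorptionProb_of_mem hP hAbs 1 hw]
    · rw [absorptionProb, absorptionProb, pow_zero, pow_one, one_mulVec,
        Set.indicator_of_notMem (by exact_mod_cast hw)]
      exact nonneg_mulVec_of_mem_rowStochastic hP (Set.indicator_nonneg fun _ _ => zero_le_one) w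
  simpa only [← absorptionProb_add, add_zero] using mulVec_mono_of_nonneg (pow_mem hP k).1 hstep

theorem exists_tendsto_absorptionProb :
    ∃ L, Tendsto (absorptionProb P Abs) atTop (𝓝 L) :=
  ⟨_, tendsto_atTop_ciSup (monotone_absorptionProb hP hAbs)
    ⟨1, Set.forall_mem_range.2 (absorptionProb_le_one hP)⟩⟩

theorem eq_one_of_tendsto_absorptionProb
    (hchain : ∀ v : V, ∃ (k : ℕ) (a : V), a ∈ Abs ∧ 0 < (P ^ k) v a) {L : V → ℝ}
    (hL : Tendsto (absorptionProb P Abs) atTop (𝓝 L)) : L = 1 := by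
  funext v
  have hle : L v ≤ 1 := le_of_tendsto' (tendsto_pi_nhds.1 hL v) fun k =>
    absorptionProb_le_one hP k v
  have hone : ∀ a ∈ Abs, L a = 1 := fun a ha => tendsto_nhds_unique (tendsto_pi_nhds.1 hL a)
    (by simp only [absorptionProb_of_mem hP hAbs _ ha, tendsto_const_nhds])
  have : Nonempty V := ⟨v⟩
  obtain ⟨u, hu⟩ := Finite.exists_min L
  obtain ⟨k, a, ha, hpos⟩ := hchain u
  have hua : L a = L u := apply_eq_of_mulVec_apply_eq_of_forall_le (pow_mem hP k) hu
    (by rw [pow_mulVec_eq_of_tendsto_absorptionProb hL]) hpos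
  show L v = 1
  exact le_antisymm hle (by rw [← hone a ha, hua]; exact hu v)

end Absorption

/-- **Total absorption.**
In a row-stochastic absorbing chain, from every state the probability of
being absorbed (in any absorbing state) within `n` steps tends to `1`. -/
theorem absorbing_chain_total_absorption_tendsto_one
    {V : Type*} [Fintype V] [DecidableEq V]
    (P : Matrix V V ℝ)
    (hnonneg : ∀ v w, 0 ≤ P v w)
    (hrow : ∀ v, ∑ w, P v w = 1)
    (Abs : Finset V) (hAbs : ∀ a : V, a ∈ Abs ↔ P a a = 1)
    (hchain : ∀ v : V, ∃ (n : ℕ) (a : V), a ∈ Abs ∧ 0 < (P ^ n) v a) :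
    ∀ v : V, Filter.Tendsto (fun n => ∑ a ∈ Abs, (P ^ n) v a)
      Filter.atTop (nhds 1) := by
  intro v
  have hP : P ∈ rowStochastic ℝ V := mem_rowStochastic_iff_sum.2 ⟨hnonneg, hrow⟩
  have hAbs' : ∀ a ∈ Abs, P a a = 1 := fun a ha => (hAbs a).1 ha
  obtain ⟨L, hL⟩ := exists_tendsto_absorptionProb hP hAbs'
  rw [eq_one_of_tendsto_absorptionProb hP hAbs' hchain hL] at hL
  simpa only [absorptionProb_apply, Pi.one_apply] using tendsto_pi_nhds.1 hL v
end

section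
/- Let V be a finite type and P : Matrix V V ℝ a row-stochastic matrix that is an absorbing chain with absorbing states Abs. Define P_T : Matrix V V ℝ by P_T i j = if i ∈ Abs then 0 else P i j. Then for every non-absorbing state v, the total weight of all finite first-passage paths from v into the absorbing states equals 1: HasSum (fun n : ℕ => ∑ t ∉ Abs, ∑ a ∈ Abs, (P_T ^ n) v t * P t a) 1. (Here (P_T ^ n) v t is the total weight of length-n paths from v to t that stay in the non-absorbing states, so the n-th summand is the probability of first entering the absorbing states at step n + 1.) -/
/-- **First-passage decomposition of total absorption.**
In a row-stochastic absorbing chain, zeroing the rows of absorbing states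
yields `P_T`, and for every non-absorbing state `v` the total weight of all
finite first-passage paths from `v` into the absorbing states is `1`. -/
theorem absorbing_chain_first_passage_hasSum_one
    {V : Type*} [Fintype V] [DecidableEq V]
    (P : Matrix V V ℝ)
    (hnonneg : ∀ v w, 0 ≤ P v w)
    (hrow : ∀ v, ∑ w, P v w = 1)
    (Abs : Finset V) (hAbs : ∀ a : V, a ∈ Abs ↔ P a a = 1)
    (hchain : ∀ v : V, ∃ (n : ℕ) (a : V), a ∈ Abs ∧ 0 < (P ^ n) v a)
    (P_T : Matrix V V ℝ)
    (hPT : ∀ i j, P_T i j = if i ∈ Abs then 0 else P i j) :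
    ∀ v : V, v ∉ Abs →
      HasSum (fun n : ℕ => ∑ t ∈ Absᶜ, ∑ a ∈ Abs, (P_T ^ n) v t * P t a) 1 := by
  classical
  -- absorbing rows of P are concentrated at the diagonal
  have habs : ∀ a ∈ Abs, ∀ w, w ≠ a → P a w = 0 := by
    intro a ha w hw
    have h1 : P a a = 1 := (hAbs a).1 ha
    have h2 : ∑ u ∈ ({a} : Finset V)ᶜ, P a u = 0 := by
      have h3 := Finset.sum_compl_add_sum ({a} : Finset V) (fun u => P a u)
      rw [hrow a] at h3
      simp [h1] at h3
      linarith
    have := (Finset.sum_eq_zero_iff_of_nonneg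
      (fun i _ => hnonneg a i)).mp h2
    exact this w (by simp [hw])
  have hPTnn : ∀ i j, 0 ≤ P_T i j := by
    intro i j; rw [hPT]; split <;> [rfl; exact hnonneg i j]
  have hPTpow : ∀ n, ∀ i j, 0 ≤ (P_T ^ n) i j := by
    intro n
    induction n with
    | zero => intro i j; simp [Matrix.one_apply]; split <;> norm_num
    | succ n ih =>
      intro i j
      rw [pow_succ, Matrix.mul_apply]
      exact Finset.sum_nonneg fun u _ => mul_nonneg (ih i u) (hPTnn u j)
  have hPTabs : ∀ a ∈ Abs, ∀ j, P_T a j = 0 := by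
    intro a ha j; rw [hPT]; simp [ha]
  -- the "survival" function
  set S : ℕ → V → ℝ := fun n w => ∑ t ∈ Absᶜ, (P_T ^ n) w t with hS
  have hSnn : ∀ n w, 0 ≤ S n w := fun n w =>
    Finset.sum_nonneg fun t _ => hPTpow n w t
  have hS0 : ∀ w ∉ Abs, S 0 w = 1 := by
    intro w hw
    simp only [hS, pow_zero, Matrix.one_apply]
    rw [Finset.sum_ite_eq (Absᶜ) w (fun _ => (1:ℝ))]
    simp [hw]
  -- recursion
  have hrec : ∀ n w, S (n + 1) w
      = ∑ t ∈ Absᶜ, (P_T ^ n) w t * (∑ u ∈ Absᶜ, P t u) := by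
    intro n w
    simp only [hS, pow_succ, Matrix.mul_apply]
    rw [Finset.sum_comm]
    have : ∀ t, ∑ u ∈ Absᶜ, (P_T ^ n) w t * P_T t u
        = (P_T ^ n) w t * ∑ u ∈ Absᶜ, P_T t u := by
      intro t; rw [Finset.mul_sum]
    rw [← Finset.sum_compl_add_sum Abs
      (fun t => ∑ u ∈ Absᶜ, (P_T ^ n) w t * P_T t u)]
    have h2 : ∑ t ∈ Abs, ∑ u ∈ Absᶜ, (P_T ^ n) w t * P_T t u = 0 := by
      apply Finset.sum_eq_zero; intro t ht
      apply Finset.sum_eq_zero; intro u _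
      rw [hPTabs t ht u, mul_zero]
    rw [h2, add_zero]
    apply Finset.sum_congr rfl
    intro t ht
    rw [this t]
    congr 1
    apply Finset.sum_congr rfl
    intro u _
    rw [hPT]
    simp [Finset.mem_compl.mp ht]
  -- first passage term as a difference
  have hf : ∀ n w, ∑ t ∈ Absᶜ, ∑ a ∈ Abs, (P_T ^ n) w t * P t a
      = S n w - S (n + 1) w := by
    intro n w
    rw [hrec]
    rw [← Finset.sum_sub_distrib]
    apply Finset.sum_congr rfl
    intro t _
    rw [← Finset.mul_sum]
    have h1 : ∑ a ∈ Abs, P t a = 1 - ∑ u ∈ Absᶜ, P t u := by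
      have := Finset.sum_compl_add_sum Abs (fun u => P t u)
      rw [hrow t] at this
      linarith
    rw [h1]; ring
  -- monotonicity
  have hmono : ∀ w, Antitone fun n => S n w := by
    intro w
    apply antitone_nat_of_succ_le
    intro n
    rw [hrec]
    apply Finset.sum_le_sum
    intro t _
    have hle : ∑ u ∈ Absᶜ, P t u ≤ 1 := by
      rw [← hrow t]
      exact Finset.sum_le_sum_of_subset_of_nonneg (Finset.subset_univ _)
        (fun i _ _ => hnonneg t i)
    calc (P_T ^ n) w t * (∑ u ∈ Absᶜ, P t u) ≤ (P_T ^ n) w t * 1 :=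
          mul_le_mul_of_nonneg_left hle (hPTpow n w t)
      _ = (P_T ^ n) w t := mul_one _
  -- P^n agrees with P_T^n on transient targets
  have hPeq : ∀ n w, ∀ t ∉ Abs, (P ^ n) w t = (P_T ^ n) w t := by
    intro n
    induction n with
    | zero => intro w t _; simp
    | succ n ih =>
      intro w t ht
      rw [pow_succ, pow_succ, Matrix.mul_apply, Matrix.mul_apply]
      rw [← Finset.sum_compl_add_sum Abs (fun u => (P ^ n) w u * P u t),
          ← Finset.sum_compl_add_sum Abs (fun u => (P_T ^ n) w u * P_T u t)]
      congr 1
      · apply Finset.sum_congr rfl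
        intro u hu
        have hu' := Finset.mem_compl.mp hu
        rw [ih w u hu', hPT]
        simp [hu']
      · rw [Finset.sum_eq_zero, Finset.sum_eq_zero]
        · intro u hu; rw [hPTabs u hu t, mul_zero]
        · intro u hu
          rw [habs u hu t (fun h => ht (h ▸ hu)), mul_zero]
  -- P^n is row-stochastic and nonneg
  have hProw : ∀ n w, ∑ t, (P ^ n) w t = 1 := by
    intro n
    induction n with
    | zero => intro w; simp [Matrix.one_apply]
    | succ n ih =>
      intro w
      simp only [pow_succ, Matrix.mul_apply]
      rw [Finset.sum_comm]
      calc ∑ u, ∑ t, (P ^ n) w u * P u t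
          = ∑ u, (P ^ n) w u * ∑ t, P u t := by
            apply Finset.sum_congr rfl; intro u _; rw [Finset.mul_sum]
        _ = 1 := by simp only [hrow, mul_one]; exact ih w
  have hPpow : ∀ n, ∀ i j, 0 ≤ (P ^ n) i j := by
    intro n
    induction n with
    | zero => intro i j; simp [Matrix.one_apply]; split <;> norm_num
    | succ n ih =>
      intro i j
      rw [pow_succ, Matrix.mul_apply]
      exact Finset.sum_nonneg fun u _ => mul_nonneg (ih i u) (hnonneg u j)
  -- absorbing states have S = 0 for n ≥ 1
  have hSabs : ∀ a ∈ Abs, ∀ n, S (n + 1) a = 0 := by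
    intro a ha n
    apply Finset.sum_eq_zero
    intro t _
    rw [pow_succ', Matrix.mul_apply]
    apply Finset.sum_eq_zero
    intro u _
    rw [hPTabs a ha u, zero_mul]
  -- every state eventually has survival < 1
  have hSlt : ∀ w : V, ∃ n, S n w < 1 := by
    intro w
    by_cases hw : w ∈ Abs
    · exact ⟨1, by rw [show (1:ℕ) = 0 + 1 from rfl, hSabs w hw 0]; norm_num⟩
    obtain ⟨n, a, ha, hpos⟩ := hchain w
    refine ⟨n, ?_⟩
    have h1 : S n w = ∑ t ∈ Absᶜ, (P ^ n) w t := by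
      apply Finset.sum_congr rfl
      intro t ht
      exact (hPeq n w t (Finset.mem_compl.mp ht)).symm
    have h2 : ∑ t ∈ Absᶜ, (P ^ n) w t + ∑ t ∈ Abs, (P ^ n) w t = 1 := by
      rw [Finset.sum_compl_add_sum]; exact hProw n w
    have h3 : (P ^ n) w a ≤ ∑ t ∈ Abs, (P ^ n) w t :=
      Finset.single_le_sum (fun t _ => hPpow n w t) ha
    rw [h1]; linarith
  -- now fix v
  intro v hv
  have hvne : (Absᶜ : Finset V).Nonempty := ⟨v, Finset.mem_compl.mpr hv⟩
  -- choose a uniform time N with survival < 1 everywhere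
  choose g hg using hSlt
  set N : ℕ := (Finset.univ.sup g) + 1 with hN
  have hN1 : 1 ≤ N := Nat.le_add_left 1 _
  have hSN : ∀ w, S N w < 1 := by
    intro w
    have : g w ≤ N := le_trans (Finset.le_sup (Finset.mem_univ w)) (Nat.le_succ _)
    exact lt_of_le_of_lt (hmono w this) (hg w)
  set M : ℝ := (Absᶜ).sup' hvne (S N) with hM
  have hM1 : M < 1 := by
    rw [hM, Finset.sup'_lt_iff]
    intro w _; exact hSN w
  have hMle : ∀ u ∈ Absᶜ, S N u ≤ M := fun u hu => Finset.le_sup' (S N) hu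
  have hM0 : 0 ≤ M := le_trans (hSnn N v) (hMle v (Finset.mem_compl.mpr hv))
  -- submultiplicativity
  have hsub : ∀ m w, S (m + N) w ≤ M * S m w := by
    intro m w
    have h1 : S (m + N) w = ∑ u, (P_T ^ m) w u * S N u := by
      simp only [hS, pow_add, Matrix.mul_apply]
      rw [Finset.sum_comm]
      apply Finset.sum_congr rfl
      intro u _
      rw [Finset.mul_sum]
    rw [h1]
    have h2 : ∑ u, (P_T ^ m) w u * S N u
        = ∑ u ∈ Absᶜ, (P_T ^ m) w u * S N u := by
      rw [← Finset.sum_compl_add_sum Abs (fun u => (P_T ^ m) w u * S N u)]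
      have : ∑ u ∈ Abs, (P_T ^ m) w u * S N u = 0 := by
        apply Finset.sum_eq_zero
        intro u hu
        have hz : S N u = 0 := by rw [hN]; exact hSabs u hu _
        rw [hz, mul_zero]
      rw [this, add_zero]
    rw [h2, Finset.mul_sum]
    apply Finset.sum_le_sum
    intro u hu
    rw [mul_comm M _]
    exact mul_le_mul_of_nonneg_left (hMle u hu) (hPTpow m w u)
  -- geometric decay at multiples of N
  have hgeo : ∀ k, S (k * N) v ≤ M ^ k := by
    intro k
    induction k with
    | zero => simp [hS0 v hv]
    | succ k ih =>
      have : (k + 1) * N = k * N + N := by ring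
      rw [this, pow_succ]
      calc S (k * N + N) v ≤ M * S (k * N) v := hsub (k * N) v
        _ ≤ M * M ^ k := mul_le_mul_of_nonneg_left ih hM0
        _ = M ^ k * M := mul_comm _ _
  -- survival tends to 0
  have htend : Filter.Tendsto (fun n => S n v) Filter.atTop (nhds 0) := by
    apply squeeze_zero (fun n => hSnn n v) (fun n => ?_)
    · exact (tendsto_pow_atTop_nhds_zero_of_lt_one hM0 hM1).comp
        (Nat.tendsto_div_const_atTop (by omega : N ≠ 0))
    · show S n v ≤ M ^ (n / N)
      calc S n v ≤ S ((n / N) * N) v :=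
            hmono v (Nat.div_mul_le_self n N)
        _ ≤ M ^ (n / N) := hgeo (n / N)
  -- conclude
  rw [hasSum_iff_tendsto_nat_of_nonneg]
  · have hpartial : ∀ K, ∑ n ∈ Finset.range K,
        (∑ t ∈ Absᶜ, ∑ a ∈ Abs, (P_T ^ n) v t * P t a) = 1 - S K v := by
      intro K
      have : ∀ n ∈ Finset.range K,
          (∑ t ∈ Absᶜ, ∑ a ∈ Abs, (P_T ^ n) v t * P t a)
          = S n v - S (n + 1) v := fun n _ => hf n v
      rw [Finset.sum_congr rfl this, Finset.sum_range_sub' (fun n => S n v) K,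
        hS0 v hv]
    simp only [hpartial]
    have := Filter.Tendsto.sub (tendsto_const_nhds (x := (1:ℝ))) htend
    simpa using this
  · intro n
    apply Finset.sum_nonneg
    intro t _
    exact Finset.sum_nonneg fun a _ =>
      mul_nonneg (hPTpow n v t) (hnonneg t a)
end

section
/- Let S be a finite type (chain states), σ a finite type, M : DFA α σ, and P : α → Matrix S S ℝ a family of labelled weight matrices. Define the labelled product matrices Qlab : α → Matrix (S × σ) (S × σ) ℝ by Qlab a (s, q) (s', q') = if M.step q a = q' then P a s s' else 0. Then for every word w : List α and all s s' : S and q q' : σ, ((w.map Qlab).prod) (s, q) (s', q') = if M.evalFrom q w = q' then ((w.map P).prod) s s' else 0. In particular, the run weight of a word in the product system equals its run weight in the original system when the word drives the DFA from q to q', and is 0 otherwise. -/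
/-- **Product system run weights (labelled version).**
For a DFA `M` and labelled weight matrices `P`, the labelled product matrices
`Qlab` satisfy: the run weight of a word `w` in the product system from
`(s, q)` to `(s', q')` equals its run weight in the original system if `w`
drives the DFA from `q` to `q'`, and is `0` otherwise. -/
theorem product_system_run_weight
    {α S σ : Type*} [Fintype S] [DecidableEq S] [Fintype σ] [DecidableEq σ]
    (M : DFA α σ) (P : α → Matrix S S ℝ)
    (Qlab : α → Matrix (S × σ) (S × σ) ℝ)
    (hQ : ∀ (a : α) (s s' : S) (q q' : σ),
      Qlab a (s, q) (s', q') = if M.step q a = q' then P a s s' else 0) :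
    ∀ (w : List α) (s s' : S) (q q' : σ),
      ((w.map Qlab).prod) (s, q) (s', q') =
        if M.evalFrom q w = q' then ((w.map P).prod) s s' else 0 := by
  intro w
  induction w with
  | nil =>
    intro s s' q q'
    simp [DFA.evalFrom, Matrix.one_apply, Prod.ext_iff]
    by_cases h : q = q' <;> simp [h]
  | cons a w ih =>
    intro s s' q q'
    have : ((a :: w).map Qlab).prod = Qlab a * (w.map Qlab).prod := by simp
    rw [this, Matrix.mul_apply]
    rw [show (∑ j : S × σ, Qlab a (s, q) j * (w.map Qlab).prod j (s', q'))
        = ∑ t : S, ∑ r : σ, Qlab a (s, q) (t, r) * (w.map Qlab).prod (t, r) (s', q')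
      from (Fintype.sum_prod_type _)]
    simp only [hQ, ih]
    rw [show M.evalFrom q (a :: w) = M.evalFrom (M.step q a) w from rfl]
    by_cases h : M.evalFrom (M.step q a) w = q'
    · simp only [h, if_true]
      rw [show ((a :: w).map P).prod = P a * (w.map P).prod by simp, Matrix.mul_apply]
      rw [Finset.sum_comm]
      rw [Finset.sum_eq_single (M.step q a)]
      · simp [h]
      · intro r _ hr
        apply Finset.sum_eq_zero
        intro t _
        simp [Ne.symm hr]
      · simp
    · simp only [h, if_false]
      apply Finset.sum_eq_zero
      intro t _
      apply Finset.sum_eq_zero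
      intro r _
      by_cases h1 : M.step q a = r
      · subst h1; simp [h]
      · simp [h1]
end

section
/- Let S be a finite type (chain states), σ a finite type, α a finite alphabet, M : DFA α σ, and P : α → Matrix S S ℝ a family of labelled weight matrices. Define the label-aggregated product matrix Qsum : Matrix (S × σ) (S × σ) ℝ by Qsum (s, q) (s', q') = ∑ a with M.step q a = q', P a s s'. Then for every n : ℕ, all s s' : S and q q' : σ, (Qsum ^ n) (s, q) (s', q') = ∑ over all f : Fin n → α with M.evalFrom q (List.ofFn f) = q' of (((List.ofFn f).map P).prod) s s'. That is, the n-step weight of the product system aggregates the run weights of exactly those length-n words that drive the DFA from q to q'. -/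
/-- **Product system powers aggregate word run weights.**
For a DFA `M` over a finite alphabet and labelled weight matrices `P`, the
label-aggregated product matrix `Qsum` satisfies: the `n`-th power entry of
`Qsum` at `((s, q), (s', q'))` equals the sum, over all length-`n` words that
drive the DFA from `q` to `q'`, of their run weights from `s` to `s'`. -/
theorem product_system_power_eq_sum_over_words
    {α S σ : Type*} [Fintype α] [Fintype S] [DecidableEq S]
    [Fintype σ] [DecidableEq σ]
    (M : DFA α σ) (P : α → Matrix S S ℝ)
    (Qsum : Matrix (S × σ) (S × σ) ℝ)
    (hQ : ∀ (s s' : S) (q q' : σ),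
      Qsum (s, q) (s', q') =
        ∑ a ∈ Finset.univ.filter (fun a : α => M.step q a = q'), P a s s') :
    ∀ (n : ℕ) (s s' : S) (q q' : σ),
      (Qsum ^ n) (s, q) (s', q') =
        ∑ f ∈ Finset.univ.filter
            (fun f : Fin n → α => M.evalFrom q (List.ofFn f) = q'),
          (((List.ofFn f).map P).prod) s s' := by
  intro n
  induction n with
  | zero =>
    intro s s' q q'
    rw [pow_zero, Finset.sum_filter, Fintype.sum_unique]
    simp only [List.ofFn_zero, DFA.evalFrom_nil, List.map_nil, List.prod_nil,
      Matrix.one_apply, Prod.mk.injEq]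
    by_cases hq : q = q' <;> by_cases hs : s = s' <;> simp [hq, hs, Matrix.one_apply]
  | succ n ih =>
    intro s s' q q'
    have step1 : (Qsum ^ (n + 1)) (s, q) (s', q')
        = ∑ a : α, ∑ t : S, P a s t * (Qsum ^ n) (t, M.step q a) (s', q') := by
      rw [pow_succ', Matrix.mul_apply, Fintype.sum_prod_type]
      have h1 : ∀ t : S, ∀ p : σ, Qsum (s, q) (t, p) * (Qsum ^ n) (t, p) (s', q')
          = ∑ a : α, if M.step q a = p then P a s t * (Qsum ^ n) (t, p) (s', q') else 0 := by
        intro t p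
        rw [hQ s t q p, Finset.sum_filter, Finset.sum_mul]
        simp [ite_mul]
      simp only [h1]
      refine Eq.trans (Finset.sum_congr rfl fun t _ => Finset.sum_comm)
        (Eq.trans Finset.sum_comm ?_)
      refine Finset.sum_congr rfl fun a _ => Finset.sum_congr rfl fun t _ => ?_
      rw [Finset.sum_ite_eq]
      simp
    rw [step1]
    have step2 : ∀ a : α, ∑ t : S, P a s t * (Qsum ^ n) (t, M.step q a) (s', q')
        = ∑ f : Fin n → α, if M.evalFrom (M.step q a) (List.ofFn f) = q'
            then (P a * ((List.ofFn f).map P).prod) s s' else 0 := by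
      intro a
      have := fun t => ih t s' (M.step q a) q'
      simp only [this, Finset.sum_filter, Finset.mul_sum]
      refine Eq.trans Finset.sum_comm ?_
      refine Finset.sum_congr rfl fun f _ => ?_
      rw [Matrix.mul_apply]
      split
      · rfl
      · simp
    simp only [step2]
    rw [Finset.sum_filter, ← Equiv.sum_comp (Fin.consEquiv fun _ : Fin (n+1) => α),
      Fintype.sum_prod_type]
    refine Finset.sum_congr rfl fun a _ => Finset.sum_congr rfl fun f _ => ?_
    simp [Fin.consEquiv, List.ofFn_succ, DFA.evalFrom]
end

section
/- Let V be a finite type and P : Matrix V V ℝ a row-stochastic matrix (not necessarily an absorbing chain), with Abs its set of absorbing states and D its set of dead states. Then for every subset A ⊆ Abs there exists a unique function x : V → ℝ such that (i) x a = 1 for every a ∈ A, (ii) x a = 0 for every a ∈ Abs \ A, (iii) x d = 0 for every d ∈ D, and (iv) x v = ∑ w, P v w * x w for every v ∉ Abs ∪ D. -/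
/-!
Put `B = Abs ∪ D`. The conditions say that `x` is prescribed on `B` and harmonic for `P` off `B`,
and every state off `B` reaches `B`. This is a square linear system, so it suffices that the
homogeneous problem has only the trivial solution. That is the maximum principle: at a positive
maximum `x` is harmonic, so `x` equals its maximum at every successor, hence along every path,
hence at some state of `B`, where it vanishes.
-/

open Matrix

section DirichletProblem

variable {V : Type*} [Fintype V] {P : Matrix V V ℝ}

lemma eq_of_forall_le_of_eq_sum_mul {x : V → ℝ} {v u : V} (hnonneg : ∀ w, 0 ≤ P v w)
    (hrow : ∑ w, P v w = 1) (hle : ∀ w, x w ≤ x v) (hv : x v = ∑ w, P v w * x w)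
    (hu : 0 < P v u) : x u = x v := by
  have hsum : ∑ w, P v w * (x v - x w) = 0 := by
    simp only [mul_sub, Finset.sum_sub_distrib, ← Finset.sum_mul, hrow, one_mul, ← hv, sub_self]
  have hterm := (Finset.sum_eq_zero_iff_of_nonneg fun w _ =>
    mul_nonneg (hnonneg w) (sub_nonneg.mpr (hle w))).mp hsum u (Finset.mem_univ u)
  have := (mul_eq_zero.mp hterm).resolve_left hu.ne'
  linarith

section MaximumPrinciple

variable [DecidableEq V]

lemma exists_pos_and_pos_of_pow_succ_pos {n : ℕ} {v w : V} (hnonneg : ∀ u, 0 ≤ P v u)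
    (h : 0 < (P ^ (n + 1)) v w) : ∃ u, 0 < P v u ∧ 0 < (P ^ n) u w := by
  rw [pow_succ', mul_apply, ← Finset.sum_const_zero] at h
  obtain ⟨u, -, hu⟩ := Finset.exists_lt_of_sum_lt h
  refine ⟨u, ?_⟩
  rcases pos_and_pos_or_neg_and_neg_of_mul_pos hu with hpos | ⟨hneg, -⟩
  · exact hpos
  · exact absurd hneg (hnonneg u).not_gt

variable (hnonneg : ∀ v w, 0 ≤ P v w) (hrow : ∀ v, ∑ w, P v w = 1) {B : Set V}
  (hreach : ∀ v ∉ B, ∃ n, ∃ b ∈ B, 0 < (P ^ n) v b)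
include hnonneg hrow hreach

theorem le_zero_of_eq_zero_on_of_eq_sum_mul_off {x : V → ℝ} (hB : ∀ b ∈ B, x b = 0)
    (hharm : ∀ v ∉ B, x v = ∑ w, P v w * x w) (v : V) : x v ≤ 0 := by
  have : Nonempty V := ⟨v⟩
  obtain ⟨v₀, hmax⟩ := Finite.exists_max x
  by_contra! hv
  have hpos : 0 < x v₀ := hv.trans_le (hmax v)
  have not_mem_of_eq_max : ∀ u, x u = x v₀ → u ∉ B := fun u hu huB => by
    linarith [hB u huB]
  have spread : ∀ n u w, x u = x v₀ → 0 < (P ^ n) u w → x w = x v₀ := by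
    intro n
    induction n with
    | zero =>
      intro u w hu huw
      rcases eq_or_ne u w with rfl | hne
      · exact hu
      · simp [one_apply_ne hne] at huw
    | succ n ih =>
      intro u w hu huw
      obtain ⟨u', huu', hu'w⟩ := exists_pos_and_pos_of_pow_succ_pos (hnonneg u) huw
      refine ih u' w ?_ hu'w
      rw [← hu]
      exact eq_of_forall_le_of_eq_sum_mul (hnonneg u) (hrow u) (fun w => hu ▸ hmax w)
        (hharm u (not_mem_of_eq_max u hu)) huu'
  obtain ⟨n, b, hb, hpath⟩ := hreach v₀ (not_mem_of_eq_max v₀ rfl)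
  exact not_mem_of_eq_max b (spread n v₀ b rfl hpath) hb

theorem eq_zero_of_eq_zero_on_of_eq_sum_mul_off {x : V → ℝ} (hB : ∀ b ∈ B, x b = 0)
    (hharm : ∀ v ∉ B, x v = ∑ w, P v w * x w) : x = 0 := by
  have hneg := le_zero_of_eq_zero_on_of_eq_sum_mul_off hnonneg hrow hreach (x := -x)
    (fun b hb => by simp [hB b hb])
    (fun v hv => by simp only [Pi.neg_apply, mul_neg, Finset.sum_neg_distrib, hharm v hv])
  funext v
  have := hneg v
  simp only [Pi.neg_apply, neg_nonpos] at this
  exact le_antisymm (le_zero_of_eq_zero_on_of_eq_sum_mul_off hnonneg hrow hreach hB hharm v) this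

end MaximumPrinciple

open Classical in
/-- `x ↦ x` on `B` and `x ↦ x - P x` off `B`. -/
noncomputable def dirichletOperator (P : Matrix V V ℝ) (B : Set V) :
    (V → ℝ) →ₗ[ℝ] (V → ℝ) :=
  LinearMap.id - (Matrix.of fun v w => if v ∈ B then 0 else P v w).mulVecLin

lemma dirichletOperator_eq_indicator_iff {B : Set V} {x g : V → ℝ} :
    dirichletOperator P B x = B.indicator g ↔
      (∀ b ∈ B, x b = g b) ∧ ∀ v ∉ B, x v = ∑ w, P v w * x w := by
  classical
  have happly : ∀ v, dirichletOperator P B x v =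
      if v ∈ B then x v else x v - ∑ w, P v w * x w := fun v => by
    by_cases hv : v ∈ B <;> simp [dirichletOperator, mulVec, dotProduct, hv]
  simp only [funext_iff, happly, Set.indicator_apply]
  constructor
  · intro h
    exact ⟨fun b hb => by simpa [hb] using h b,
      fun v hv => by simpa [hv, sub_eq_zero] using h v⟩
  · rintro ⟨hB, hharm⟩ v
    by_cases hv : v ∈ B
    · simp [hv, hB v hv]
    · simp [hv, ← hharm v hv]

theorem existsUnique_eq_on_and_eq_sum_mul_off [DecidableEq V] (hnonneg : ∀ v w, 0 ≤ P v w)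
    (hrow : ∀ v, ∑ w, P v w = 1) {B : Set V} (hreach : ∀ v ∉ B, ∃ n, ∃ b ∈ B, 0 < (P ^ n) v b)
    (g : V → ℝ) :
    ∃! x : V → ℝ, (∀ b ∈ B, x b = g b) ∧ ∀ v ∉ B, x v = ∑ w, P v w * x w := by
  have hinj : Function.Injective (dirichletOperator P B) := by
    refine (injective_iff_map_eq_zero _).mpr fun x hx => ?_
    rw [← Set.indicator_zero' (s := B) (M := ℝ), dirichletOperator_eq_indicator_iff] at hx
    exact eq_zero_of_eq_zero_on_of_eq_sum_mul_off hnonneg hrow hreach hx.1 hx.2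
  have hbij : Function.Bijective (dirichletOperator P B) :=
    ⟨hinj, LinearMap.injective_iff_surjective.mp hinj⟩
  simpa only [dirichletOperator_eq_indicator_iff] using hbij.existsUnique (B.indicator g)

end DirichletProblem

lemma forall_mem_union_eq_indicator_one_iff {α R : Type*} [Zero R] [One R] {A S T : Set α}
    (hA : A ⊆ S) (hAT : Disjoint A T) (x : α → R) :
    (∀ b ∈ S ∪ T, x b = A.indicator 1 b) ↔
      (∀ a ∈ A, x a = 1) ∧ (∀ a ∈ S \ A, x a = 0) ∧ ∀ t ∈ T, x t = 0 := by
  have hTA : ∀ t ∈ T, t ∉ A := fun t ht => Set.disjoint_right.mp hAT ht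
  constructor
  · intro h
    exact ⟨fun a ha => by simpa [ha] using h a (Or.inl (hA ha)),
      fun a ha => by simpa [ha.2] using h a (Or.inl ha.1),
      fun t ht => by simpa [hTA t ht] using h t (Or.inr ht)⟩
  · rintro ⟨h₁, h₂, h₃⟩ b (hb | hb)
    · by_cases hbA : b ∈ A
      · simp [hbA, h₁ b hbA]
      · simp [hbA, h₂ b ⟨hb, hbA⟩]
    · simp [hTA b hb, h₃ b hb]

theorem stochastic_matrix_exists_unique_absorption_vector_with_dead_general
    {V : Type*} [Fintype V] [DecidableEq V]
    (P : Matrix V V ℝ)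
    (hnonneg : ∀ v w, 0 ≤ P v w)
    (hrow : ∀ v, ∑ w, P v w = 1)
    (Abs : Set V)
    (D : Set V)
    (hD : D = {v : V | v ∉ Abs ∧ ¬ ∃ (n : ℕ) (a : V), a ∈ Abs ∧ 0 < (P ^ n) v a})
    (A : Set V) (hA : A ⊆ Abs) :
    ∃! x : V → ℝ,
      (∀ a ∈ A, x a = 1) ∧
      (∀ a ∈ Abs \ A, x a = 0) ∧
      (∀ d ∈ D, x d = 0) ∧
      (∀ v ∉ Abs ∪ D, x v = ∑ w, P v w * x w) := by
  have hreach : ∀ v ∉ Abs ∪ D, ∃ n, ∃ b ∈ Abs ∪ D, 0 < (P ^ n) v b := by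
    intro v hv
    rw [Set.mem_union, not_or, hD, Set.mem_ofPred_eq, not_and, not_not] at hv
    obtain ⟨n, a, ha, hpos⟩ := hv.2 hv.1
    exact ⟨n, a, Or.inl ha, hpos⟩
  have hAD : Disjoint A D := Set.disjoint_left.mpr fun a ha hd => (hD ▸ hd).1 (hA ha)
  refine (existsUnique_congr fun x => ?_).mp
    (existsUnique_eq_on_and_eq_sum_mul_off hnonneg hrow hreach (A.indicator 1))
  rw [forall_mem_union_eq_indicator_one_iff hA hAD, and_assoc, and_assoc]

/-- **Absorption equations with livelocks: existence and uniqueness.**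
For a row-stochastic matrix `P` with absorbing states `Abs` and dead
(livelock) states `D`, for every target set `A ⊆ Abs` there is a unique
`x : V → ℝ` with `x = 1` on `A`, `x = 0` on `Abs \ A` and on `D`, and
satisfying the flow equations on all remaining states. -/
theorem stochastic_matrix_exists_unique_absorption_vector_with_dead
    {V : Type*} [Fintype V] [DecidableEq V]
    (P : Matrix V V ℝ)
    (hnonneg : ∀ v w, 0 ≤ P v w)
    (hrow : ∀ v, ∑ w, P v w = 1)
    (Abs : Set V) (hAbs : Abs = {a : V | P a a = 1})
    (D : Set V)
    (hD : D = {v : V | v ∉ Abs ∧ ¬ ∃ (n : ℕ) (a : V), a ∈ Abs ∧ 0 < (P ^ n) v a})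
    (A : Set V) (hA : A ⊆ Abs) :
    ∃! x : V → ℝ,
      (∀ a ∈ A, x a = 1) ∧
      (∀ a ∈ Abs \ A, x a = 0) ∧
      (∀ d ∈ D, x d = 0) ∧
      (∀ v ∉ Abs ∪ D, x v = ∑ w, P v w * x w) :=
  stochastic_matrix_exists_unique_absorption_vector_with_dead_general P hnonneg hrow Abs D hD A hA
end

section
/- Let V be a finite type and P : Matrix V V ℝ a row-stochastic matrix, with Abs its set of absorbing states, D its set of dead states, and A ⊆ Abs. If x : V → ℝ satisfies (i) x a = 1 for every a ∈ A, (ii) x a = 0 for every a ∈ Abs \ A, (iii) x d = 0 for every d ∈ D, and (iv) x v = ∑ w, P v w * x w for every v ∉ Abs ∪ D, then for every state v the sequence n ↦ ∑ a ∈ A, (P ^ n) v a converges to x v. -/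
/-- **Absorption probabilities as limits, with livelocks.**
If `x` solves the absorption equations (with dead states forced to `0`) for a
target set `A ⊆ Abs` of a row-stochastic matrix `P`, then for every state `v`
the `n`-step probability of having been absorbed in `A` converges to `x v`. -/
theorem stochastic_matrix_absorption_prob_tendsto_with_dead
    {V : Type*} [Fintype V] [DecidableEq V]
    (P : Matrix V V ℝ)
    (hnonneg : ∀ v w, 0 ≤ P v w)
    (hrow : ∀ v, ∑ w, P v w = 1)
    (Abs : Set V) (hAbs : Abs = {a : V | P a a = 1})
    (D : Set V)
    (hD : D = {v : V | v ∉ Abs ∧ ¬ ∃ (n : ℕ) (a : V), a ∈ Abs ∧ 0 < (P ^ n) v a})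
    (A : Finset V) (hA : ∀ a ∈ A, a ∈ Abs)
    (x : V → ℝ)
    (hx1 : ∀ a ∈ A, x a = 1)
    (hx0 : ∀ a ∈ Abs \ (A : Set V), x a = 0)
    (hxD : ∀ d ∈ D, x d = 0)
    (hxs : ∀ v ∉ Abs ∪ D, x v = ∑ w, P v w * x w) :
    ∀ v : V, Filter.Tendsto (fun n => ∑ a ∈ A, (P ^ n) v a)
      Filter.atTop (nhds (x v)) := by
  classical
  -- nonnegativity of powers
  have hpownn : ∀ (n : ℕ) (v w : V), 0 ≤ (P ^ n) v w := by
    intro n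
    induction n with
    | zero =>
      intro v w
      by_cases h : v = w <;> simp [Matrix.one_apply, h]
    | succ n ih =>
      intro v w
      rw [pow_succ, Matrix.mul_apply]
      exact Finset.sum_nonneg fun u _ => mul_nonneg (ih v u) (hnonneg u w)
  -- rows of powers sum to 1
  have hpowrow : ∀ (n : ℕ) (v : V), ∑ w, (P ^ n) v w = 1 := by
    intro n
    induction n with
    | zero => intro v; simp [Matrix.one_apply]
    | succ n ih =>
      intro v
      have : ∀ w, (P ^ (n + 1)) v w = ∑ u, (P ^ n) v u * P u w := by
        intro w; rw [pow_succ, Matrix.mul_apply]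
      simp_rw [this]
      rw [Finset.sum_comm]
      simp_rw [← Finset.mul_sum, hrow, mul_one]
      exact ih v
  -- absorbing rows
  have habs0 : ∀ a ∈ Abs, ∀ w, w ≠ a → P a w = 0 := by
    intro a ha w hw
    have haa : P a a = 1 := by rw [hAbs] at ha; exact ha
    have h1 : P a a + ∑ w ∈ Finset.univ.erase a, P a w = 1 := by
      rw [Finset.add_sum_erase _ _ (Finset.mem_univ a)]; exact hrow a
    have h2 : ∑ w ∈ Finset.univ.erase a, P a w = 0 := by rw [haa] at h1; linarith
    have := (Finset.sum_eq_zero_iff_of_nonneg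
      (fun u _ => hnonneg a u)).mp h2
    exact this w (Finset.mem_erase.mpr ⟨hw, Finset.mem_univ w⟩)
  have habs_pow : ∀ a ∈ Abs, ∀ (n : ℕ) (w : V),
      (P ^ n) a w = if w = a then 1 else 0 := by
    intro a ha n
    induction n with
    | zero =>
      intro w
      rcases eq_or_ne w a with h | h
      · simp [h, Matrix.one_apply]
      · rw [pow_zero, Matrix.one_apply, if_neg (fun hh => h hh.symm), if_neg h]
    | succ n ih =>
      intro w
      rw [pow_succ', Matrix.mul_apply]
      rw [Finset.sum_eq_single a]
      · have haa : P a a = 1 := by rw [hAbs] at ha; exact ha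
        rw [haa, one_mul, ih w]
      · intro u _ hu
        rw [habs0 a ha u hu, zero_mul]
      · intro h; exact absurd (Finset.mem_univ a) h
  -- dead states only lead to dead states
  have hdead : ∀ d ∈ D, ∀ (n : ℕ) (w : V), 0 < (P ^ n) d w → w ∈ D := by
    intro d hd n w hpos
    have hd' : d ∉ Abs ∧ ¬∃ (n : ℕ) (a : V), a ∈ Abs ∧ 0 < (P ^ n) d a := by
      rw [hD] at hd; exact hd
    rw [hD]
    constructor
    · intro hw; exact hd'.2 ⟨n, w, hw, hpos⟩
    · rintro ⟨k, a, ha, hka⟩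
      apply hd'.2
      refine ⟨n + k, a, ha, ?_⟩
      have h1 : (P ^ (n + k)) d a = ∑ u, (P ^ n) d u * (P ^ k) u a := by
        rw [pow_add, Matrix.mul_apply]
      rw [h1]
      calc (0:ℝ) < (P ^ n) d w * (P ^ k) w a := mul_pos hpos hka
        _ ≤ ∑ u, (P ^ n) d u * (P ^ k) u a :=
          Finset.single_le_sum
            (fun u _ => mul_nonneg (hpownn n d u) (hpownn k u a))
            (Finset.mem_univ w)
  -- monotonicity of absorption probabilities
  have hmono : ∀ a ∈ Abs, ∀ (n k : ℕ) (v : V),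
      (P ^ n) v a ≤ (P ^ (n + k)) v a := by
    intro a ha n k v
    have h1 : (P ^ (n + k)) v a = ∑ u, (P ^ n) v u * (P ^ k) u a := by
      rw [pow_add, Matrix.mul_apply]
    rw [h1]
    have h2 : (P ^ n) v a * (P ^ k) a a = (P ^ n) v a := by
      rw [habs_pow a ha k a]; simp
    calc (P ^ n) v a = (P ^ n) v a * (P ^ k) a a := h2.symm
      _ ≤ ∑ u, (P ^ n) v u * (P ^ k) u a :=
        Finset.single_le_sum
          (fun u _ => mul_nonneg (hpownn n v u) (hpownn k u a))
          (Finset.mem_univ a)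
  -- transient states
  set TF : Finset V := Finset.univ.filter (fun u => u ∉ Abs ∧ u ∉ D) with hTF_def
  have hTFmem : ∀ u, u ∈ TF ↔ u ∉ Abs ∧ u ∉ D := by
    intro u; simp [hTF_def]
  have hT : ∀ v ∈ TF, ∃ (n : ℕ) (a : V), a ∈ Abs ∧ 0 < (P ^ n) v a := by
    intro v hv
    obtain ⟨h1, h2⟩ := (hTFmem v).mp hv
    by_contra hcon
    exact h2 (by rw [hD]; exact ⟨h1, hcon⟩)
  -- choose a uniform time m
  have hT' : ∀ v : V, ∃ n : ℕ, v ∈ TF → ∃ a, a ∈ Abs ∧ 0 < (P ^ n) v a := by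
    intro v
    by_cases hv : v ∈ TF
    · obtain ⟨n, a, ha, hp⟩ := hT v hv
      exact ⟨n, fun _ => ⟨a, ha, hp⟩⟩
    · exact ⟨0, fun h => absurd h hv⟩
  choose f hf using hT'
  obtain ⟨m, hm1, hmreach⟩ :
      ∃ m, 1 ≤ m ∧ ∀ v ∈ TF, ∃ a, a ∈ Abs ∧ 0 < (P ^ m) v a := by
    refine ⟨1 + TF.sup f, le_add_of_nonneg_right (Nat.zero_le _), ?_⟩
    intro v hv
    obtain ⟨a, ha, hp⟩ := hf v hv
    have hle : f v ≤ 1 + TF.sup f :=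
      le_trans (Finset.le_sup hv) (by omega)
    refine ⟨a, ha, lt_of_lt_of_le hp ?_⟩
    have := hmono a ha (f v) (1 + TF.sup f - f v) v
    rwa [Nat.add_sub_cancel' hle] at this
  -- remaining transient mass
  set t : ℕ → V → ℝ := fun n v => ∑ w ∈ TF, (P ^ n) v w with ht_def
  have ht_nonneg : ∀ n v, 0 ≤ t n v :=
    fun n v => Finset.sum_nonneg fun w _ => hpownn n v w
  have ht_le_one : ∀ n v, t n v ≤ 1 := by
    intro n v
    calc t n v ≤ ∑ w, (P ^ n) v w :=
        Finset.sum_le_sum_of_subset_of_nonneg (Finset.subset_univ TF)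
          (fun w _ _ => hpownn n v w)
      _ = 1 := hpowrow n v
  have htz : ∀ (n : ℕ) (u : V), u ∉ TF → t n u = 0 := by
    intro n u hu
    have hcases : u ∈ Abs ∨ u ∈ D := by
      by_contra h
      push_neg at h
      exact hu ((hTFmem u).mpr h)
    apply Finset.sum_eq_zero
    intro w hw
    obtain ⟨hw1, hw2⟩ := (hTFmem w).mp hw
    rcases hcases with hu1 | hu2
    · rw [habs_pow u hu1 n w]
      have hne : w ≠ u := fun h => hw1 (by rw [h]; exact hu1)
      rw [if_neg hne]
    · by_contra hne
      have hpos : 0 < (P ^ n) u w := lt_of_le_of_ne (hpownn n u w) (Ne.symm hne)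
      exact hw2 (hdead u hu2 n w hpos)
  have hsplit : ∀ (n k : ℕ) (v : V),
      t (n + k) v = ∑ u ∈ TF, (P ^ n) v u * t k u := by
    intro n k v
    have h1 : ∀ w, (P ^ (n + k)) v w = ∑ u, (P ^ n) v u * (P ^ k) u w := by
      intro w; rw [pow_add, Matrix.mul_apply]
    calc t (n + k) v = ∑ w ∈ TF, ∑ u, (P ^ n) v u * (P ^ k) u w := by
          rw [ht_def]; exact Finset.sum_congr rfl fun w _ => h1 w
      _ = ∑ u, ∑ w ∈ TF, (P ^ n) v u * (P ^ k) u w := Finset.sum_comm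
      _ = ∑ u, (P ^ n) v u * t k u := by
          refine Finset.sum_congr rfl fun u _ => ?_
          rw [ht_def, Finset.mul_sum]
      _ = ∑ u ∈ TF, (P ^ n) v u * t k u := by
          refine (Finset.sum_subset (Finset.subset_univ TF) ?_).symm
          intro u _ hu
          rw [htz k u hu, mul_zero]
  -- the contraction constant
  obtain ⟨c, hc0, hc1, hc⟩ : ∃ c : ℝ, 0 ≤ c ∧ c < 1 ∧ ∀ v ∈ TF, t m v ≤ c := by
    by_cases hne : TF.Nonempty
    · refine ⟨TF.sup' hne (t m), ?_, ?_, fun v hv => Finset.le_sup' (t m) hv⟩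
      · obtain ⟨v0, hv0⟩ := hne
        exact le_trans (ht_nonneg m v0) (Finset.le_sup' (t m) hv0)
      · rw [Finset.sup'_lt_iff]
        intro v hv
        obtain ⟨a, ha, hpa⟩ := hmreach v hv
        have haTF : a ∉ TF := fun h => ((hTFmem a).mp h).1 ha
        have hsum : (P ^ m) v a + t m v ≤ 1 := by
          rw [ht_def]
          calc (P ^ m) v a + ∑ w ∈ TF, (P ^ m) v w
              = ∑ w ∈ insert a TF, (P ^ m) v w := (Finset.sum_insert haTF).symm
            _ ≤ ∑ w, (P ^ m) v w :=
              Finset.sum_le_sum_of_subset_of_nonneg (Finset.subset_univ _)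
                (fun w _ _ => hpownn m v w)
            _ = 1 := hpowrow m v
        linarith
    · exact ⟨0, le_refl 0, by norm_num,
        fun v hv => absurd ⟨v, hv⟩ hne⟩
  have hcontr : ∀ (n : ℕ) (v : V), t (n + m) v ≤ c * t n v := by
    intro n v
    rw [hsplit n m v]
    calc ∑ u ∈ TF, (P ^ n) v u * t m u
        ≤ ∑ u ∈ TF, (P ^ n) v u * c :=
          Finset.sum_le_sum fun u hu =>
            mul_le_mul_of_nonneg_left (hc u hu) (hpownn n v u)
      _ = c * t n v := by rw [← Finset.sum_mul, mul_comm, ht_def]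
  have hq : ∀ (q : ℕ) (v : V), t (q * m) v ≤ c ^ q := by
    intro q
    induction q with
    | zero => intro v; simpa using ht_le_one 0 v
    | succ q ih =>
      intro v
      have : (q + 1) * m = q * m + m := by ring
      rw [this, pow_succ]
      calc t (q * m + m) v ≤ c * t (q * m) v := hcontr (q * m) v
        _ ≤ c * c ^ q := mul_le_mul_of_nonneg_left (ih v) hc0
        _ = c ^ q * c := mul_comm _ _
  have hanti : ∀ (k n : ℕ) (v : V), k ≤ n → t n v ≤ t k v := by
    intro k n v hkn
    have : n = k + (n - k) := by omega
    rw [this, hsplit]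
    calc ∑ u ∈ TF, (P ^ k) v u * t (n - k) u
        ≤ ∑ u ∈ TF, (P ^ k) v u * 1 :=
          Finset.sum_le_sum fun u _ =>
            mul_le_mul_of_nonneg_left (ht_le_one _ u) (hpownn k v u)
      _ = t k v := by simp [ht_def]
  have hmpos : 0 < m := hm1
  have htlim : ∀ v, Filter.Tendsto (fun n => t n v) Filter.atTop (nhds 0) := by
    intro v
    apply squeeze_zero (fun n => ht_nonneg n v) (g := fun n => c ^ (n / m))
    · intro n
      calc t n v ≤ t (n / m * m) v := hanti _ _ v (Nat.div_mul_le_self n m)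
        _ ≤ c ^ (n / m) := hq (n / m) v
    · exact (tendsto_pow_atTop_nhds_zero_of_lt_one hc0 hc1).comp
        (Filter.tendsto_atTop_atTop.mpr fun b =>
          ⟨b * m, fun n hn => (Nat.le_div_iff_mul_le hmpos).mpr hn⟩)
  -- the offset vector
  set y : V → ℝ := fun w => x w - (if w ∈ A then (1:ℝ) else 0) with hy_def
  have hy0 : ∀ w, w ∉ TF → y w = 0 := by
    intro w hw
    have hcases : w ∈ Abs ∨ w ∈ D := by
      by_contra h
      push_neg at h
      exact hw ((hTFmem w).mpr h)
    rcases hcases with h1 | h2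
    · by_cases hwA : w ∈ A
      · simp [hy_def, hwA, hx1 w hwA]
      · simp [hy_def, hwA, hx0 w ⟨h1, hwA⟩]
    · have hwA : w ∉ A := by
        intro hwA
        have : w ∉ Abs := by rw [hD] at h2; exact h2.1
        exact this (hA w hwA)
      simp [hy_def, hwA, hxD w h2]
  -- x is harmonic
  have hharm : ∀ v, ∑ u, P v u * x u = x v := by
    intro v
    by_cases hv1 : v ∈ Abs
    · rw [Finset.sum_eq_single v]
      · have : P v v = 1 := by rw [hAbs] at hv1; exact hv1
        rw [this, one_mul]
      · intro u _ hu; rw [habs0 v hv1 u hu, zero_mul]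
      · intro h; exact absurd (Finset.mem_univ v) h
    by_cases hv2 : v ∈ D
    · rw [hxD v hv2]
      apply Finset.sum_eq_zero
      intro u _
      by_cases hP : P v u = 0
      · rw [hP, zero_mul]
      · have hpos : 0 < P v u := lt_of_le_of_ne (hnonneg v u) (Ne.symm hP)
        have hpos' : 0 < (P ^ 1) v u := by rwa [pow_one]
        rw [hxD u (hdead v hv2 1 u hpos'), mul_zero]
    · exact (hxs v (by simp [hv1, hv2])).symm
  -- main identity
  have hind : ∀ w : V, (if w ∈ A then (1:ℝ) else 0) + y w = x w := by
    intro w; simp [hy_def]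
  have hmain : ∀ (n : ℕ) (v : V),
      x v = (∑ a ∈ A, (P ^ n) v a) + ∑ u, (P ^ n) v u * y u := by
    intro n
    induction n with
    | zero =>
      intro v
      have h1 : ∑ a ∈ A, (P ^ 0) v a = if v ∈ A then (1:ℝ) else 0 := by
        simp only [pow_zero, Matrix.one_apply]
        exact Finset.sum_ite_eq A v (fun _ => (1:ℝ))
      have h2 : ∑ u, (P ^ 0) v u * y u = y v := by
        simp [Matrix.one_apply, ite_mul]
      rw [h1, h2, hind v]
    | succ n ih =>
      intro v
      have h1 : ∀ w, (P ^ (n + 1)) v w = ∑ u, P v u * (P ^ n) u w := by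
        intro w; rw [pow_succ', Matrix.mul_apply]
      calc x v = ∑ u, P v u * x u := (hharm v).symm
        _ = ∑ u, P v u * ((∑ a ∈ A, (P ^ n) u a) + ∑ w, (P ^ n) u w * y w) :=
            Finset.sum_congr rfl fun u _ => by rw [← ih u]
        _ = (∑ u, P v u * ∑ a ∈ A, (P ^ n) u a)
            + ∑ u, P v u * ∑ w, (P ^ n) u w * y w := by
            rw [← Finset.sum_add_distrib]
            exact Finset.sum_congr rfl fun u _ => by ring
        _ = (∑ a ∈ A, (P ^ (n + 1)) v a) + ∑ w, (P ^ (n + 1)) v w * y w := by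
            congr 1
            · simp_rw [Finset.mul_sum]
              rw [Finset.sum_comm]
              exact Finset.sum_congr rfl fun a _ => by rw [h1 a]
            · simp_rw [Finset.mul_sum]
              rw [Finset.sum_comm]
              refine Finset.sum_congr rfl fun w _ => ?_
              rw [h1 w, Finset.sum_mul]
              exact Finset.sum_congr rfl fun u _ => by ring
  -- conclusion
  intro v
  set M : ℝ := Finset.univ.sup' ⟨v, Finset.mem_univ v⟩ (fun w => |y w|) with hM_def
  have hM : ∀ w, |y w| ≤ M := by
    intro w
    rw [hM_def]
    exact Finset.le_sup' (fun w => |y w|) (Finset.mem_univ w)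
  have hM0 : 0 ≤ M := le_trans (abs_nonneg (y v)) (hM v)
  have herr : ∀ n : ℕ, |(∑ a ∈ A, (P ^ n) v a) - x v| ≤ M * t n v := by
    intro n
    have h1 : (∑ a ∈ A, (P ^ n) v a) - x v = -(∑ u, (P ^ n) v u * y u) := by
      rw [hmain n v]; ring
    have h2 : ∑ u, (P ^ n) v u * y u = ∑ u ∈ TF, (P ^ n) v u * y u := by
      refine (Finset.sum_subset (Finset.subset_univ TF) ?_).symm
      intro u _ hu; rw [hy0 u hu, mul_zero]
    rw [h1, abs_neg, h2]
    calc |∑ u ∈ TF, (P ^ n) v u * y u|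
        ≤ ∑ u ∈ TF, |(P ^ n) v u * y u| := Finset.abs_sum_le_sum_abs _ _
      _ ≤ ∑ u ∈ TF, (P ^ n) v u * M := by
          refine Finset.sum_le_sum fun u _ => ?_
          rw [abs_mul, abs_of_nonneg (hpownn n v u)]
          exact mul_le_mul_of_nonneg_left (hM u) (hpownn n v u)
      _ = M * t n v := by rw [← Finset.sum_mul, mul_comm, ht_def]
  rw [← tendsto_sub_nhds_zero_iff]
  refine squeeze_zero_norm (a := fun n => M * t n v) (fun n => ?_) ?_
  · simpa [Real.norm_eq_abs] using herr n
  · simpa using (htlim v).const_mul M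
end

section
/- Let V be a finite type and P : Matrix V V ℝ a row-stochastic matrix with absorbing states Abs and dead states D. Suppose a state v can reach a dead state with positive probability, i.e., there exist m : ℕ and d ∈ D with 0 < (P ^ m) v d. Then the total absorption probability from v is strictly less than 1: there exists L < 1 such that Filter.Tendsto (fun n => ∑ a ∈ Abs, (P ^ n) v a) Filter.atTop (nhds L). -/
/-- **Livelocks leak probability.**
For a row-stochastic matrix `P`, if a state `v` can reach a dead (livelock)
state with positive probability, then the total absorption probability from
`v` converges to some limit strictly below `1`. -/
theorem reach_dead_state_total_absorption_lt_one
    {V : Type*} [Fintype V] [DecidableEq V]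
    (P : Matrix V V ℝ)
    (hnonneg : ∀ v w, 0 ≤ P v w)
    (hrow : ∀ v, ∑ w, P v w = 1)
    (Abs : Finset V) (hAbs : ∀ a : V, a ∈ Abs ↔ P a a = 1)
    (D : Set V)
    (hD : D = {v : V | v ∉ Abs ∧ ¬ ∃ (n : ℕ) (a : V), a ∈ Abs ∧ 0 < (P ^ n) v a})
    (v : V)
    (hv : ∃ (m : ℕ) (d : V), d ∈ D ∧ 0 < (P ^ m) v d) :
    ∃ L < (1 : ℝ), Filter.Tendsto (fun n => ∑ a ∈ Abs, (P ^ n) v a)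
      Filter.atTop (nhds L) := by
  obtain ⟨m, d, hdD, hmd⟩ := hv
  -- nonnegativity of powers
  have hpnn : ∀ n (x y : V), 0 ≤ (P ^ n) x y := by
    intro n
    induction n with
    | zero =>
      intro x y
      simp only [pow_zero, Matrix.one_apply]
      split <;> norm_num
    | succ n ih =>
      intro x y
      rw [pow_succ, Matrix.mul_apply]
      exact Finset.sum_nonneg fun u _ => mul_nonneg (ih x u) (hnonneg u y)
  -- row sums of powers are 1
  have hprow : ∀ n (x : V), ∑ w, (P ^ n) x w = 1 := by
    intro n
    induction n with
    | zero => intro x; simp [Matrix.one_apply]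
    | succ n ih =>
      intro x
      simp only [pow_succ, Matrix.mul_apply]
      rw [Finset.sum_comm]
      calc ∑ u, ∑ w, (P ^ n) x u * P u w
          = ∑ u, (P ^ n) x u * ∑ w, P u w := by
            simp [Finset.mul_sum]
        _ = 1 := by simp [hrow, ih]
  -- dead state never reaches Abs
  rw [hD] at hdD
  obtain ⟨_, hdead⟩ := hdD
  have hdzero : ∀ k (a : V), a ∈ Abs → (P ^ k) d a = 0 := by
    intro k a ha
    refine le_antisymm ?_ (hpnn k d a)
    by_contra h
    exact hdead ⟨k, a, ha, lt_of_not_ge h⟩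
  set s : ℕ → ℝ := fun n => ∑ a ∈ Abs, (P ^ n) v a with hs
  -- monotone
  have hmono : Monotone s := by
    refine monotone_nat_of_le_succ fun n => ?_
    simp only [hs, pow_succ, Matrix.mul_apply]
    refine Finset.sum_le_sum fun a ha => ?_
    have h1 : (P ^ n) v a * P a a ≤ ∑ w, (P ^ n) v w * P w a := by
      refine Finset.single_le_sum (fun w _ => mul_nonneg (hpnn n v w) (hnonneg w a))
        (Finset.mem_univ a)
    rwa [(hAbs a).mp ha, mul_one] at h1
  -- bounded above by 1
  have hbdd : ∀ n (x : V), s n ≤ 1 ∧ ∑ a ∈ Abs, (P ^ n) x a ≤ 1 := by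
    intro n x
    constructor <;>
    · rw [show (1:ℝ) = ∑ w, (P ^ n) _ w from (hprow n _).symm]
      exact Finset.sum_le_sum_of_subset_of_nonneg (Finset.subset_univ Abs)
        (fun w _ _ => hpnn n _ w)
  -- bound away from 1 for n ≥ m
  have hbound : ∀ n, m ≤ n → s n ≤ 1 - (P ^ m) v d := by
    intro n hn
    have hsplit : P ^ n = P ^ m * P ^ (n - m) := by
      rw [← pow_add, Nat.add_sub_cancel' hn]
    have : s n = ∑ w, (P ^ m) v w * ∑ a ∈ Abs, (P ^ (n - m)) w a := by
      simp only [hs, hsplit, Matrix.mul_apply]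
      rw [Finset.sum_comm]
      simp [Finset.mul_sum]
    rw [this]
    have hd0 : (P ^ m) v d * ∑ a ∈ Abs, (P ^ (n - m)) d a = 0 := by
      rw [Finset.sum_congr rfl fun a ha => hdzero (n - m) a ha]
      simp
    rw [← Finset.sum_erase_add _ _ (Finset.mem_univ d), hd0, add_zero]
    have h1 : ∑ w ∈ Finset.univ.erase d, (P ^ m) v w * ∑ a ∈ Abs, (P ^ (n - m)) w a
        ≤ ∑ w ∈ Finset.univ.erase d, (P ^ m) v w := by
      refine Finset.sum_le_sum fun w _ => ?_
      calc (P ^ m) v w * ∑ a ∈ Abs, (P ^ (n - m)) w a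
          ≤ (P ^ m) v w * 1 := by
            exact mul_le_mul_of_nonneg_left (hbdd (n - m) w).2 (hpnn m v w)
        _ = (P ^ m) v w := mul_one _
    have h2 : ∑ w ∈ Finset.univ.erase d, (P ^ m) v w = 1 - (P ^ m) v d := by
      have := Finset.sum_erase_add Finset.univ (fun w => (P ^ m) v w) (Finset.mem_univ d)
      rw [hprow m v] at this
      linarith
    linarith
  -- convergence
  have hB : BddAbove (Set.range s) := ⟨1, by rintro x ⟨n, rfl⟩; exact (hbdd n v).1⟩
  have htend : Filter.Tendsto s Filter.atTop (nhds (⨆ n, s n)) :=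
    tendsto_atTop_ciSup hmono hB
  refine ⟨⨆ n, s n, ?_, htend⟩
  have : (⨆ n, s n) ≤ 1 - (P ^ m) v d :=
    le_of_tendsto htend (Filter.eventually_atTop.mpr ⟨m, hbound⟩)
  linarith
end

section
/- Let V be a finite type and P : Matrix V V ℝ a row-stochastic matrix that is an absorbing chain with absorbing states Abs. Let T be the subtype of non-absorbing states and Q : Matrix T T ℝ the restriction of P to T (Q i j = P i j). Then the matrix 1 − Q is invertible (IsUnit (1 − Q).det). -/
/-- **Invertibility of the fundamental system.**
For a row-stochastic absorbing chain `P`, restricting `P` to the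
non-absorbing states gives `Q`, and `1 - Q` is invertible. -/
theorem absorbing_chain_one_sub_Q_isUnit_det
    {V : Type*} [Fintype V] [DecidableEq V]
    (P : Matrix V V ℝ)
    (hnonneg : ∀ v w, 0 ≤ P v w)
    (hrow : ∀ v, ∑ w, P v w = 1)
    (Abs : Set V) (hAbs : Abs = {a : V | P a a = 1})
    (hchain : ∀ v : V, ∃ (n : ℕ) (a : V), a ∈ Abs ∧ 0 < (P ^ n) v a)
    (Q : Matrix {v : V // P v v ≠ 1} {v : V // P v v ≠ 1} ℝ)
    (hQ : ∀ i j : {v : V // P v v ≠ 1}, Q i j = P i j) :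
    IsUnit (1 - Q).det := by
  by_contra h
  rw [isUnit_iff_ne_zero, not_not] at h
  obtain ⟨x, hx0, hxv⟩ := Matrix.exists_mulVec_eq_zero_iff.mpr h
  -- x is a fixed vector of Q
  have hfix : ∀ i : {v : V // P v v ≠ 1}, ∑ j, Q i j * x j = x i := by
    intro i
    have := congrFun hxv i
    simp only [Matrix.mulVec, dotProduct, Matrix.sub_apply, Matrix.one_apply,
      sub_mul, ite_mul, one_mul, zero_mul, Finset.sum_sub_distrib, Finset.sum_ite_eq,
      Finset.mem_univ, if_true, Pi.zero_apply] at this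
    linarith
  have hQnn : ∀ i j : {v : V // P v v ≠ 1}, 0 ≤ Q i j := fun i j => by
    rw [hQ]; exact hnonneg _ _
  -- pick a coordinate of maximal absolute value
  obtain ⟨i1, hi1⟩ := Function.ne_iff.mp hx0
  simp only [Pi.zero_apply] at hi1
  obtain ⟨i0, -, hi0⟩ := Finset.exists_max_image Finset.univ (fun i => |x i|)
    ⟨i1, Finset.mem_univ _⟩
  set M := |x i0| with hMdef
  have hMpos : 0 < M := lt_of_lt_of_le (abs_pos.mpr hi1) (hi0 i1 (Finset.mem_univ _))
  have hle : ∀ j : {v : V // P v v ≠ 1}, |x j| ≤ M := fun j => hi0 j (Finset.mem_univ _)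
  -- sum of row over T vs full P-row
  have hsplit : ∀ i : {v : V // P v v ≠ 1}, (∑ j : {v : V // P v v ≠ 1}, P (i : V) (j : V)) =
      ∑ w ∈ Finset.univ.filter (fun w => P w w ≠ 1), P (i : V) w := by
    intro i
    exact (Finset.sum_subtype _ (by simp) _).symm
  -- key step lemma
  have key : ∀ i : {v : V // P v v ≠ 1}, |x i| = M → ∀ w : V, P (i : V) w ≠ 0 →
      ∃ h : P w w ≠ 1, |x ⟨w, h⟩| = M := by
    intro i hiM w hw
    have hQP : (∑ j : {v : V // P v v ≠ 1}, Q i j) =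
        ∑ j : {v : V // P v v ≠ 1}, P (i : V) (j : V) :=
      Finset.sum_congr rfl fun j _ => hQ i j
    have hrowT : (∑ j : {v : V // P v v ≠ 1}, Q i j) ≤ 1 := by
      rw [hQP, hsplit i]
      exact le_trans (Finset.sum_le_sum_of_subset_of_nonneg
        (Finset.filter_subset _ _) (fun w _ _ => hnonneg _ _)) (le_of_eq (hrow _))
    have h1 : M ≤ ∑ j : {v : V // P v v ≠ 1}, Q i j * |x j| := by
      calc M = |x i| := hiM.symm
        _ = |∑ j, Q i j * x j| := by rw [hfix i]
        _ ≤ ∑ j, |Q i j * x j| := Finset.abs_sum_le_sum_abs _ _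
        _ = ∑ j, Q i j * |x j| := Finset.sum_congr rfl fun j _ => by
            rw [abs_mul, abs_of_nonneg (hQnn i j)]
    have h2 : (∑ j : {v : V // P v v ≠ 1}, Q i j * |x j|) ≤
        (∑ j : {v : V // P v v ≠ 1}, Q i j) * M := by
      rw [Finset.sum_mul]
      exact Finset.sum_le_sum fun j _ =>
        mul_le_mul_of_nonneg_left (hle j) (hQnn i j)
    have h3 : (∑ j : {v : V // P v v ≠ 1}, Q i j) * M ≤ M := by nlinarith
    have hSM : (∑ j : {v : V // P v v ≠ 1}, Q i j) * M = M :=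
      le_antisymm h3 (le_trans h1 h2)
    have hsum1 : (∑ j : {v : V // P v v ≠ 1}, Q i j) = 1 := by
      have := hSM; nlinarith
    have hS1 : (∑ j : {v : V // P v v ≠ 1}, Q i j * |x j|) = M := by
      have := le_trans h2 h3; linarith
    have hterm : ∀ j : {v : V // P v v ≠ 1}, Q i j ≠ 0 → |x j| = M := by
      have hz : (∑ j : {v : V // P v v ≠ 1}, Q i j * (M - |x j|)) = 0 := by
        simp only [mul_sub]
        rw [Finset.sum_sub_distrib, ← Finset.sum_mul, hsum1, one_mul, hS1, sub_self]
      intro j hj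
      have := (Finset.sum_eq_zero_iff_of_nonneg
        (fun j _ => mul_nonneg (hQnn i j) (by linarith [hle j]))).mp hz j
        (Finset.mem_univ _)
      rcases mul_eq_zero.mp this with h' | h'
      · exact absurd h' hj
      · linarith [hle j]
    -- entries of the P-row outside T vanish
    have houtside : ∀ v : V, P v v = 1 → P (i : V) v = 0 := by
      have hQsumP : (∑ w ∈ Finset.univ.filter (fun w => P w w ≠ 1), P (i : V) w) = 1 := by
        rw [← hsplit i, ← hQP]; exact hsum1
      have hcompl : (∑ w ∈ Finset.univ.filter (fun w => ¬ P w w ≠ 1), P (i : V) w) = 0 := by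
        have := Finset.sum_filter_add_sum_filter_not Finset.univ
          (fun w => P w w ≠ 1) (fun w => P (i : V) w)
        rw [hQsumP, hrow] at this
        linarith
      intro v hv
      exact (Finset.sum_eq_zero_iff_of_nonneg
        (fun w _ => hnonneg (i : V) w)).mp hcompl v
        (Finset.mem_filter.mpr ⟨Finset.mem_univ _, by simp [hv]⟩)
    by_cases hwT : P w w = 1
    · exact absurd (houtside w hwT) hw
    · refine ⟨hwT, hterm ⟨w, hwT⟩ ?_⟩
      rw [hQ i ⟨w, hwT⟩]
      exact hw
  -- powers of P are nonnegative
  have hPn : ∀ n (v w : V), 0 ≤ (P ^ n) v w := by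
    intro n
    induction n with
    | zero => intro v w; simp [Matrix.one_apply]; positivity
    | succ n ih =>
      intro v w
      rw [pow_succ, Matrix.mul_apply]
      exact Finset.sum_nonneg fun u _ => mul_nonneg (ih v u) (hnonneg u w)
  -- main induction: from i0 we never reach outside the max set
  have main : ∀ n (w : V), 0 < (P ^ n) (i0 : V) w →
      ∃ h : P w w ≠ 1, |x ⟨w, h⟩| = M := by
    intro n
    induction n with
    | zero =>
      intro w hw
      simp only [pow_zero, Matrix.one_apply] at hw
      by_cases hew : (i0 : V) = w
      · subst hew; exact ⟨i0.2, by cases i0; rfl⟩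
      · simp [hew] at hw
    | succ n ih =>
      intro w hw
      rw [pow_succ, Matrix.mul_apply] at hw
      obtain ⟨u, -, hu⟩ := Finset.exists_lt_of_sum_lt (f := fun _ => (0:ℝ)) (by simpa using hw)
      have hu1 : 0 < (P ^ n) (i0 : V) u := by
        rcases lt_or_eq_of_le (hPn n (i0 : V) u) with h' | h'
        · exact h'
        · exfalso; rw [← h'] at hu; simp at hu
      have hu2 : P u w ≠ 0 := by
        intro h'; rw [h'] at hu; simp at hu
      obtain ⟨hT, hM⟩ := ih u hu1
      exact key ⟨u, hT⟩ hM w hu2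
  obtain ⟨n, a, haAbs, hpos⟩ := hchain (i0 : V)
  rw [hAbs] at haAbs
  obtain ⟨ha, -⟩ := main n a hpos
  exact ha haAbs
end

section
/- Let V be a finite type and P : Matrix V V ℝ a row-stochastic matrix that is an absorbing chain with absorbing states Abs. If x : V → ℝ satisfies x a = 0 for every a ∈ Abs and x v = ∑ w, P v w * x w for every v ∉ Abs, then x = 0. -/
/-- **Uniqueness kernel of the absorption system.**
In a row-stochastic absorbing chain, any `x` that vanishes on all absorbing
states and is harmonic (`x v = ∑ w, P v w * x w`) on all other states is
identically zero. -/
theorem absorbing_chain_harmonic_vanishing_eq_zero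
    {V : Type*} [Fintype V] [DecidableEq V]
    (P : Matrix V V ℝ)
    (hnonneg : ∀ v w, 0 ≤ P v w)
    (hrow : ∀ v, ∑ w, P v w = 1)
    (Abs : Set V) (hAbs : Abs = {a : V | P a a = 1})
    (hchain : ∀ v : V, ∃ (n : ℕ) (a : V), a ∈ Abs ∧ 0 < (P ^ n) v a)
    (x : V → ℝ)
    (hx0 : ∀ a ∈ Abs, x a = 0)
    (hxs : ∀ v ∉ Abs, x v = ∑ w, P v w * x w) :
    x = 0 := by
  subst hAbs
  have habs : ∀ a : V, P a a = 1 → ∀ w, w ≠ a → P a w = 0 := by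
    intro a ha w hw
    have h1 : ∑ u ∈ Finset.univ.erase a, P a u = 0 := by
      have h2 := hrow a
      rw [← Finset.add_sum_erase _ _ (Finset.mem_univ a), ha] at h2
      linarith
    exact (Finset.sum_eq_zero_iff_of_nonneg (fun i _ => hnonneg a i)).mp h1 w
      (Finset.mem_erase.mpr ⟨hw, Finset.mem_univ w⟩)
  have hstep : ∀ v, x v = ∑ w, P v w * x w := by
    intro v
    by_cases hv : P v v = 1
    · rw [hx0 v hv]
      symm
      apply Finset.sum_eq_zero
      intro w _
      by_cases hw : w = v
      · subst hw; rw [hx0 w hv]; ring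
      · rw [habs v hv w hw]; ring
    · exact hxs v hv
  have hpow_nonneg : ∀ (n : ℕ) (v w : V), 0 ≤ (P ^ n) v w := by
    intro n
    induction n with
    | zero =>
      intro v w
      rw [pow_zero, Matrix.one_apply]
      split <;> norm_num
    | succ n ih =>
      intro v w
      rw [pow_succ, Matrix.mul_apply]
      exact Finset.sum_nonneg fun u _ => mul_nonneg (ih v u) (hnonneg u w)
  have hpow_row : ∀ (n : ℕ) (v : V), ∑ w, (P ^ n) v w = 1 := by
    intro n
    induction n with
    | zero => intro v; simp [Matrix.one_apply]
    | succ n ih =>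
      intro v
      calc ∑ w, (P ^ (n+1)) v w = ∑ w, ∑ u, (P ^ n) v u * P u w := by
            simp [pow_succ, Matrix.mul_apply]
        _ = ∑ u, (P ^ n) v u * ∑ w, P u w := by
            rw [Finset.sum_comm]; simp [Finset.mul_sum]
        _ = 1 := by simp [hrow, ih v]
  have hiter : ∀ (n : ℕ) (v : V), x v = ∑ w, (P ^ n) v w * x w := by
    intro n
    induction n with
    | zero => intro v; simp [Matrix.one_apply]
    | succ n ih =>
      intro v
      calc x v = ∑ u, (P ^ n) v u * x u := ih v
        _ = ∑ u, (P ^ n) v u * ∑ w, P u w * x w := by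
            simp_rw [← hstep]
        _ = ∑ w, (∑ u, (P ^ n) v u * P u w) * x w := by
            simp_rw [Finset.mul_sum, Finset.sum_mul, mul_assoc]
            exact Finset.sum_comm
        _ = ∑ w, (P ^ (n+1)) v w * x w := by
            simp [pow_succ, Matrix.mul_apply]
  funext v
  show x v = 0
  obtain ⟨u, -, hu⟩ := Finset.exists_max_image Finset.univ (fun w => |x w|)
    ⟨v, Finset.mem_univ v⟩
  have hmax : ∀ w : V, |x w| ≤ |x u| := fun w => hu w (Finset.mem_univ w)
  have hu0 : |x u| = 0 := by
    by_contra h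
    have hM : 0 < |x u| := lt_of_le_of_ne (abs_nonneg _) (Ne.symm h)
    obtain ⟨n, a, ha, hpa⟩ := hchain u
    have hxa : x a = 0 := hx0 a ha
    have hle : |x u| ≤ (1 - (P ^ n) u a) * |x u| := by
      calc |x u| = |∑ w, (P ^ n) u w * x w| := by rw [← hiter n u]
        _ ≤ ∑ w, |(P ^ n) u w * x w| := Finset.abs_sum_le_sum_abs _ _
        _ = ∑ w, (P ^ n) u w * |x w| := by
            apply Finset.sum_congr rfl
            intro w _
            rw [abs_mul, abs_of_nonneg (hpow_nonneg n u w)]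
        _ = ∑ w ∈ Finset.univ.erase a, (P ^ n) u w * |x w| := by
            rw [← Finset.add_sum_erase _ _ (Finset.mem_univ a), hxa]
            simp
        _ ≤ ∑ w ∈ Finset.univ.erase a, (P ^ n) u w * |x u| := by
            apply Finset.sum_le_sum
            intro w _
            exact mul_le_mul_of_nonneg_left (hmax w) (hpow_nonneg n u w)
        _ = (1 - (P ^ n) u a) * |x u| := by
            rw [← Finset.sum_mul]
            congr 1
            have := hpow_row n u
            rw [← Finset.add_sum_erase _ _ (Finset.mem_univ a)] at this
            linarith
    nlinarith
  have := hmax v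
  rw [hu0] at this
  exact abs_nonpos_iff.mp this
end

section
/- Let V be a finite type and P : Matrix V V ℝ a row-stochastic matrix that is an absorbing chain with absorbing states Abs. Then for every state v and every non-absorbing state t, the probability of being at t after n steps vanishes: Filter.Tendsto (fun n => (P ^ n) v t) Filter.atTop (nhds 0). -/
open Filter Finset

section AuxACTPZ
variable {V : Type*} [Fintype V] [DecidableEq V] (P : Matrix V V ℝ)

lemma actpz_pow_nonneg (hnonneg : ∀ v w, 0 ≤ P v w) :
    ∀ (n : ℕ) (v w : V), 0 ≤ (P ^ n) v w := by
  intro n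
  induction n with
  | zero =>
    intro v w
    by_cases h : v = w <;> simp [Matrix.one_apply, h]
  | succ n ih =>
    intro v w
    rw [pow_succ, Matrix.mul_apply]
    exact Finset.sum_nonneg fun u _ => mul_nonneg (ih v u) (hnonneg u w)

lemma actpz_pow_row (hrow : ∀ v, ∑ w, P v w = 1) :
    ∀ (n : ℕ) (v : V), ∑ w, (P ^ n) v w = 1 := by
  intro n
  induction n with
  | zero => intro v; simp [Matrix.one_apply]
  | succ n ih =>
    intro v
    simp only [pow_succ, Matrix.mul_apply]
    rw [Finset.sum_comm]
    calc ∑ u, ∑ w, (P ^ n) v u * P u w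
        = ∑ u, (P ^ n) v u * ∑ w, P u w := by
          simp [Finset.mul_sum]
      _ = 1 := by simp [hrow, ih v]

lemma actpz_abs_row (hnonneg : ∀ v w, 0 ≤ P v w) (hrow : ∀ v, ∑ w, P v w = 1)
    {a : V} (ha : P a a = 1) : ∀ w, w ≠ a → P a w = 0 := by
  have h0 : ∑ w ∈ Finset.univ.erase a, P a w = 0 := by
    have := hrow a
    rw [← Finset.add_sum_erase _ _ (Finset.mem_univ a), ha] at this
    linarith
  intro w hw
  have := (Finset.sum_eq_zero_iff_of_nonneg (fun u _ => hnonneg a u)).1 h0 w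
    (Finset.mem_erase.2 ⟨hw, Finset.mem_univ w⟩)
  exact this

lemma actpz_abs_pow (hnonneg : ∀ v w, 0 ≤ P v w) (hrow : ∀ v, ∑ w, P v w = 1)
    {a : V} (ha : P a a = 1) : ∀ (n : ℕ) (w : V), w ≠ a → (P ^ n) a w = 0 := by
  intro n
  induction n with
  | zero => intro w hw; simp [Matrix.one_apply, Ne.symm hw]
  | succ n ih =>
    intro w hw
    rw [pow_succ', Matrix.mul_apply]
    refine Finset.sum_eq_zero fun u _ => ?_
    by_cases hu : u = a
    · subst hu; rw [ih w hw, mul_zero]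
    · rw [actpz_abs_row P hnonneg hrow ha u hu, zero_mul]

end AuxACTPZ
/-- **Transient states die out.**
In a row-stochastic absorbing chain, for every state `v` and every
non-absorbing state `t`, the probability of being at `t` after `n` steps
tends to `0`. -/
theorem absorbing_chain_transient_prob_tendsto_zero
    {V : Type*} [Fintype V] [DecidableEq V]
    (P : Matrix V V ℝ)
    (hnonneg : ∀ v w, 0 ≤ P v w)
    (hrow : ∀ v, ∑ w, P v w = 1)
    (Abs : Set V) (hAbs : Abs = {a : V | P a a = 1})
    (hchain : ∀ v : V, ∃ (n : ℕ) (a : V), a ∈ Abs ∧ 0 < (P ^ n) v a) :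
    ∀ (v t : V), t ∉ Abs →
      Filter.Tendsto (fun n => (P ^ n) v t) Filter.atTop (nhds 0) := by
  classical
  subst hAbs
  intro v t ht
  have ht' : P t t ≠ 1 := ht
  have hpn := actpz_pow_nonneg P hnonneg
  have hpr := actpz_pow_row P hrow
  set T : Finset V := Finset.univ.filter (fun s => P s s ≠ 1) with hT
  have htT : t ∈ T := by simp [hT, ht']
  set g : V → ℕ → ℝ := fun u n => ∑ s ∈ T, (P ^ n) u s with hg
  have hg_nonneg : ∀ u n, 0 ≤ g u n := fun u n =>
    Finset.sum_nonneg fun s _ => hpn n u s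
  have hg_le_one : ∀ u n, g u n ≤ 1 := by
    intro u n
    calc g u n ≤ ∑ s, (P ^ n) u s :=
          Finset.sum_le_sum_of_subset_of_nonneg (Finset.filter_subset _ _)
            (fun s _ _ => hpn n u s)
      _ = 1 := hpr n u
  have hg_abs : ∀ u, P u u = 1 → ∀ n, g u n = 0 := by
    intro u hu n
    refine Finset.sum_eq_zero fun s hs => ?_
    have hsu : s ≠ u := by
      intro h; subst h
      simp only [hT, Finset.mem_filter] at hs
      exact hs.2 hu
    exact actpz_abs_pow P hnonneg hrow hu n s hsu
  have hg_add : ∀ u n m, g u (n + m) = ∑ w ∈ T, (P ^ n) u w * g w m := by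
    intro u n m
    calc g u (n + m) = ∑ s ∈ T, ∑ w, (P ^ n) u w * (P ^ m) w s := by
          simp [hg, pow_add, Matrix.mul_apply]
      _ = ∑ w, (P ^ n) u w * g w m := by
          rw [Finset.sum_comm]
          simp [hg, Finset.mul_sum]
      _ = ∑ w ∈ T, (P ^ n) u w * g w m := by
          symm
          apply Finset.sum_subset (Finset.subset_univ T)
          intro w _ hw
          have hw1 : P w w = 1 := by
            simp only [hT, Finset.mem_filter, Finset.mem_univ, true_and,
              not_not] at hw
            exact hw
          rw [hg_abs w hw1, mul_zero]
  have hg_mono : ∀ u n m, g u (n + m) ≤ g u n := by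
    intro u n m
    rw [hg_add]
    calc ∑ w ∈ T, (P ^ n) u w * g w m ≤ ∑ w ∈ T, (P ^ n) u w * 1 :=
          Finset.sum_le_sum fun w _ =>
            mul_le_mul_of_nonneg_left (hg_le_one w m) (hpn n u w)
      _ = g u n := by simp [hg]
  have hlt : ∀ u : V, ∃ n : ℕ, g u n < 1 := by
    intro u
    obtain ⟨n, a, haAbs, hpos⟩ := hchain u
    have haa : P a a = 1 := haAbs
    refine ⟨n, ?_⟩
    have haT : a ∉ T := by simp [hT, haa]
    have hsum : (P ^ n) u a + g u n ≤ 1 := by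
      have h1 : ∑ s ∈ insert a T, (P ^ n) u s ≤ ∑ s, (P ^ n) u s :=
        Finset.sum_le_sum_of_subset_of_nonneg (Finset.subset_univ _)
          (fun s _ _ => hpn n u s)
      rw [Finset.sum_insert haT, hpr n u] at h1
      exact h1
    linarith
  choose N0 hN0 using hlt
  set N : ℕ := 1 + Finset.univ.sup N0 with hNdef
  have hN : 0 < N := by omega
  have hgN : ∀ u, g u N < 1 := by
    intro u
    have h1 : N0 u ≤ N := by
      have := Finset.le_sup (f := N0) (Finset.mem_univ u)
      omega
    calc g u N = g u (N0 u + (N - N0 u)) := by rw [Nat.add_sub_cancel' h1]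
      _ ≤ g u (N0 u) := hg_mono u _ _
      _ < 1 := hN0 u
  have hne : (Finset.univ : Finset V).Nonempty := ⟨t, Finset.mem_univ t⟩
  set c : ℝ := Finset.univ.sup' hne (fun u => g u N) with hc
  have hc1 : c < 1 := (Finset.sup'_lt_iff hne).2 fun u _ => hgN u
  have hgc : ∀ u, g u N ≤ c := fun u => Finset.le_sup' (fun u => g u N) (Finset.mem_univ u)
  have hc0 : 0 ≤ c := le_trans (hg_nonneg t N) (hgc t)
  have hgeom : ∀ (k : ℕ) (u : V), g u (k * N) ≤ c ^ k := by
    intro k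
    induction k with
    | zero => intro u; simpa using hg_le_one u 0
    | succ k ih =>
      intro u
      have hkn : (k + 1) * N = N + k * N := by ring
      rw [hkn, hg_add]
      calc ∑ w ∈ T, (P ^ N) u w * g w (k * N)
          ≤ ∑ w ∈ T, (P ^ N) u w * c ^ k :=
            Finset.sum_le_sum fun w _ =>
              mul_le_mul_of_nonneg_left (ih w) (hpn N u w)
        _ = g u N * c ^ k := by rw [← Finset.sum_mul]
        _ ≤ c * c ^ k :=
            mul_le_mul_of_nonneg_right (hgc u) (pow_nonneg hc0 k)
        _ = c ^ (k + 1) := by ring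
  have hbound : ∀ n : ℕ, (P ^ n) v t ≤ c ^ (n / N) := by
    intro n
    have h1 : (P ^ n) v t ≤ g v n :=
      Finset.single_le_sum (fun s _ => hpn n v s) htT
    have h2 : g v n ≤ c ^ (n / N) := by
      have hmod : n = (n / N) * N + n % N := (Nat.div_add_mod' n N).symm
      calc g v n = g v ((n / N) * N + n % N) := by rw [← hmod]
        _ ≤ g v ((n / N) * N) := hg_mono v _ _
        _ ≤ c ^ (n / N) := hgeom _ v
    linarith
  have h1 : Filter.Tendsto (fun k : ℕ => c ^ k) Filter.atTop (nhds 0) :=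
    tendsto_pow_atTop_nhds_zero_of_lt_one hc0 hc1
  have h2 : Filter.Tendsto (fun n : ℕ => n / N) Filter.atTop Filter.atTop :=
    Filter.tendsto_atTop_atTop.2 fun b =>
      ⟨b * N, fun n hn => (Nat.le_div_iff_mul_le hN).2 hn⟩
  exact squeeze_zero (fun n => hpn n v t) hbound (h1.comp h2)
end

section
/- Let V be a finite type and P : Matrix V V ℝ a row-stochastic matrix (not necessarily an absorbing chain) with absorbing states Abs. Then for every state v and every state t that is not absorbing but reaches the absorbing states, Filter.Tendsto (fun n => (P ^ n) v t) Filter.atTop (nhds 0). -/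
open Finset Filter

/-- **Transient states die out (general stochastic matrix).**
For any row-stochastic matrix `P`, if a state `t` is not absorbing but can
reach the absorbing states, then from any state `v` the probability of being
at `t` after `n` steps tends to `0`. -/
theorem stochastic_matrix_transient_prob_tendsto_zero
    {V : Type*} [Fintype V] [DecidableEq V]
    (P : Matrix V V ℝ)
    (hnonneg : ∀ v w, 0 ≤ P v w)
    (hrow : ∀ v, ∑ w, P v w = 1)
    (Abs : Set V) (hAbs : Abs = {a : V | P a a = 1}) :
    ∀ (v t : V), t ∉ Abs →
      (∃ (n : ℕ) (a : V), a ∈ Abs ∧ 0 < (P ^ n) t a) →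
      Filter.Tendsto (fun n => (P ^ n) v t) Filter.atTop (nhds 0) := by
  subst hAbs
  intro v t ht hreach
  obtain ⟨n, a, haAbs, hpos⟩ := hreach
  have haa : P a a = 1 := haAbs
  have hta : t ≠ a := fun h => ht (h ▸ haAbs)
  -- row a of P is a point mass at a
  have hPa : ∀ w, w ≠ a → P a w = 0 := by
    intro w hw
    have h2 : ∑ u ∈ univ.erase a, P a u = 0 := by
      have h3 := Finset.add_sum_erase univ (P a) (mem_univ a)
      have h1 := hrow a
      linarith
    exact (Finset.sum_eq_zero_iff_of_nonneg (fun u _ => hnonneg a u)).mp h2 w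
      (Finset.mem_erase.mpr ⟨hw, mem_univ w⟩)
  -- entries of powers are nonnegative
  have hpnn : ∀ k (x y : V), 0 ≤ (P ^ k) x y := by
    intro k
    induction k with
    | zero => intro x y; rw [pow_zero]; simp [Matrix.one_apply]; positivity
    | succ k ih =>
      intro x y
      rw [pow_succ, Matrix.mul_apply]
      exact Finset.sum_nonneg fun u _ => mul_nonneg (ih x u) (hnonneg u y)
  -- rows of powers sum to 1
  have hprow : ∀ k (x : V), ∑ w, (P ^ k) x w = 1 := by
    intro k
    induction k with
    | zero => intro x; simp [Matrix.one_apply]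
    | succ k ih =>
      intro x
      simp only [pow_succ, Matrix.mul_apply]
      rw [Finset.sum_comm]
      calc ∑ u, ∑ w, (P ^ k) x u * P u w
          = ∑ u, (P ^ k) x u * ∑ w, P u w := by
            simp [Finset.mul_sum]
        _ = 1 := by simp only [hrow, mul_one]; exact ih x
  -- (P^k) a a = 1
  have hpaa : ∀ k, (P ^ k) a a = 1 := by
    intro k
    induction k with
    | zero => simp [Matrix.one_apply]
    | succ k ih =>
      rw [pow_succ', Matrix.mul_apply]
      rw [Finset.sum_eq_single a]
      · rw [haa, one_mul, ih]
      · intro u _ hu; rw [hPa u hu, zero_mul]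
      · intro h; exact absurd (mem_univ a) h
  set g : ℕ → ℝ := fun k => (P ^ k) v a with hg
  have hmono : Monotone g := by
    apply monotone_nat_of_le_succ
    intro k
    have : (P ^ (k + 1)) v a = ∑ u, (P ^ k) v u * P u a := by
      rw [pow_succ, Matrix.mul_apply]
    rw [hg]
    simp only []
    rw [this]
    calc (P ^ k) v a = (P ^ k) v a * P a a := by rw [haa, mul_one]
      _ ≤ ∑ u, (P ^ k) v u * P u a :=
          Finset.single_le_sum (fun u _ => mul_nonneg (hpnn k v u) (hnonneg u a))
            (mem_univ a)
  have hbdd : ∀ k, g k ≤ 1 := by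
    intro k
    calc g k ≤ ∑ w, (P ^ k) v w :=
          Finset.single_le_sum (fun w _ => hpnn k v w) (mem_univ a)
      _ = 1 := hprow k v
  have hBdd : BddAbove (Set.range g) := ⟨1, by rintro x ⟨k, rfl⟩; exact hbdd k⟩
  have hL : Tendsto g atTop (nhds (⨆ k, g k)) := tendsto_atTop_ciSup hmono hBdd
  have hL2 : Tendsto (fun k => g (k + n)) atTop (nhds (⨆ k, g k)) :=
    hL.comp (tendsto_add_atTop_nat n)
  have hdiff : Tendsto (fun k => g (k + n) - g k) atTop (nhds 0) := by
    have := hL2.sub hL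
    simpa using this
  set ε := (P ^ n) t a with hε
  have hkey : ∀ k, ε * (P ^ k) v t ≤ g (k + n) - g k := by
    intro k
    have hsplit : (P ^ (k + n)) v a = ∑ u, (P ^ k) v u * (P ^ n) u a := by
      rw [pow_add, Matrix.mul_apply]
    have hsub : ({a, t} : Finset V) ⊆ univ := Finset.subset_univ _
    have hpair : ∑ u ∈ ({a, t} : Finset V), (P ^ k) v u * (P ^ n) u a
        ≤ ∑ u, (P ^ k) v u * (P ^ n) u a := by
      apply Finset.sum_le_sum_of_subset_of_nonneg hsub
      intro u _ _
      exact mul_nonneg (hpnn k v u) (hpnn n u a)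
    rw [Finset.sum_pair (Ne.symm hta)] at hpair
    rw [hpaa n, mul_one] at hpair
    have : g k + (P ^ k) v t * ε ≤ g (k + n) := by
      rw [hg]; simp only []
      rw [hsplit]
      exact hpair
    linarith [this]
  apply squeeze_zero (fun k => hpnn k v t) (g := fun k => (g (k + n) - g k) / ε)
  · intro k
    rw [le_div_iff₀ hpos]
    linarith [hkey k]
  · have := hdiff.div_const ε
    simpa using this
end
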